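/- arXiv:2211.04371 — 6 statements merged into one kernel-verified Lean document; each statement's English description precedes it below -/
import Mathlib

section
/- Let z ∈ F(Σ) be a nontrivial, cyclically reduced element that is not a proper power. If i ∈ ℤ and g, h ∈ F(Σ) are such that z^i = g·z·h and the expression g·z·h is freely reduced, then i ≥ 1 and both g and h are integer powers of z. -/
open List

namespace Stmt8

variable {α : Type*} [DecidableEq α]

abbrev Rel : (α × Bool) → (α × Bool) → Prop := fun a b => ¬(a.1 = b.1 ∧ a.2 = !b.2)

lemma reduce_eq_self_of_chain' :
    ∀ {l : List (α × Bool)}, l.Chain' Rel → FreeGroup.reduce l = l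
  | [], _ => rfl
  | [_], _ => rfl
  | x :: y :: l, h => by
    replace h : List.IsChain Rel (x :: y :: l) := h
    rw [List.isChain_cons_cons] at h
    rw [FreeGroup.reduce.cons, reduce_eq_self_of_chain' h.2]
    exact if_neg h.1

lemma chain'_of_reduce_eq_self :
    ∀ {l : List (α × Bool)}, FreeGroup.reduce l = l → l.Chain' Rel := by
  intro l
  induction l with
  | nil => intro _; simp [List.Chain']
  | cons x l ih =>
    intro h
    have hle : (FreeGroup.reduce l).length ≤ l.length :=
      FreeGroup.Red.length_le FreeGroup.reduce.red
    rw [FreeGroup.reduce.cons] at h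
    cases e : FreeGroup.reduce l with
    | nil =>
      rw [e] at h
      have h' : ([x] : List (α × Bool)) = x :: l := h
      have : l = [] := by simpa using congrArg List.tail h'.symm
      subst this; simp [List.Chain']
    | cons hd tl =>
      rw [e] at h
      have h' : (if x.1 = hd.1 ∧ x.2 = !hd.2 then tl else x :: hd :: tl) = x :: l := h
      by_cases hc : x.1 = hd.1 ∧ x.2 = !hd.2
      · rw [if_pos hc] at h'
        have h1 : tl.length = l.length + 1 := by rw [h']; simp
        have h2 : (FreeGroup.reduce l).length = tl.length + 1 := by rw [e]; simp
        omega
      · rw [if_neg hc] at h'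
        have h2 : l = hd :: tl := by simpa using congrArg List.tail h'.symm
        have h3 : FreeGroup.reduce l = l := by rw [e, h2]
        subst h2
        exact List.isChain_cons_cons.2 ⟨hc, ih h3⟩

lemma red_eq_of_length {l₁ l₂ : List (α × Bool)} (h : FreeGroup.Red l₁ l₂)
    (hl : l₁.length ≤ l₂.length) : l₁ = l₂ := by
  rcases h.cases_head with rfl | ⟨c, s, r⟩
  · rfl
  · have h1 := FreeGroup.Red.Step.length s
    have h2 := FreeGroup.Red.length_le r
    omega

lemma mk_pow (l : List (α × Bool)) :
    ∀ n : ℕ, FreeGroup.mk l ^ n = FreeGroup.mk ((List.replicate n l).flatten)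
  | 0 => by rw [pow_zero, FreeGroup.one_eq_mk]; simp
  | n + 1 => by
    rw [pow_succ', mk_pow l n, FreeGroup.mul_mk, List.replicate_succ, List.flatten_cons]

lemma len_flat (v : List (α × Bool)) (n : ℕ) :
    ((List.replicate n v).flatten).length = n * v.length := by
  induction n with
  | zero => simp
  | succ n ih => rw [List.replicate_succ, List.flatten_cons]; simp [ih, Nat.succ_mul]; ring

lemma chain'_flat {v : List (α × Bool)} (h : (v ++ v).Chain' Rel) :
    ∀ n : ℕ, ((List.replicate n v).flatten).Chain' Rel
  | 0 => by simp [List.Chain']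
  | 1 => by simpa [List.Chain'] using h.prefix (List.prefix_append v v)
  | n + 2 => by
    have ih := chain'_flat h (n + 1)
    rw [List.replicate_succ, List.flatten_cons]
    rcases eq_or_ne v [] with rfl | hv
    · simpa using ih
    rcases List.isChain_append.1 h with ⟨h1, _, h3⟩
    refine List.isChain_append.2 ⟨h1, ih, ?_⟩
    intro x hx y hy
    refine h3 x hx y ?_
    rw [List.replicate_succ, List.flatten_cons] at hy
    rwa [List.head?_append_of_ne_nil _ hv] at hy

lemma pow_toWord {z : FreeGroup α} (h : (z.toWord ++ z.toWord).Chain' Rel) (n : ℕ) :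
    (z ^ n).toWord = (List.replicate n z.toWord).flatten := by
  conv_lhs => rw [← FreeGroup.mk_toWord (x := z)]
  rw [mk_pow, FreeGroup.toWord_mk, reduce_eq_self_of_chain' (chain'_flat h n)]


lemma invRev_append (a b : List (α × Bool)) :
    FreeGroup.invRev (a ++ b) = FreeGroup.invRev b ++ FreeGroup.invRev a := by
  simp [FreeGroup.invRev]


lemma eq_nil_of_invRev_eq {l : List (α × Bool)} (hc : l.Chain' Rel)
    (h : FreeGroup.invRev l = l) : l = [] := by
  by_contra hne
  have hm0 : 0 < l.length := List.length_pos_iff.2 hne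
  have key : ∀ k k' (hk : k < l.length) (hk' : k' < l.length), k + k' + 1 = l.length →
      l[k] = ((l[k']).1, !(l[k']).2) := by
    intro k k' hk hk' hsum
    have h0 : (FreeGroup.invRev l)[k]? = l[k]? := by rw [h]
    rw [FreeGroup.invRev] at h0
    rw [List.getElem?_reverse (by simpa using hk)] at h0
    simp only [List.length_map] at h0
    rw [show l.length - 1 - k = k' from by omega] at h0
    rw [List.getElem?_map] at h0
    rw [List.getElem?_eq_getElem hk', List.getElem?_eq_getElem hk] at h0
    simpa using h0.symm
  have hget := List.isChain_iff_getElem.1 hc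
  rcases Nat.even_or_odd l.length with ⟨j, hj⟩ | ⟨j, hj⟩
  · have hj1 : 1 ≤ j := by omega
    have h1 := key (j - 1) (j - 1 + 1) (by omega) (by omega) (by omega)
    have h2 := hget (j - 1) (by omega)
    exact h2 ⟨by rw [h1], by rw [h1]⟩
  · have h1 := key j j (by omega) (by omega) (by omega)
    have := congrArg Prod.snd h1
    simp at this

lemma comm_aux : ∀ (N : ℕ) (x y : List (α × Bool)), x.length + y.length ≤ N →
    x ++ y = y ++ x →
    ∃ (t : List (α × Bool)) (k m : ℕ),
      x = (List.replicate k t).flatten ∧ y = (List.replicate m t).flatten := by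
  intro N
  induction N with
  | zero =>
    intro x y hl _
    have hx : x = [] := by simpa using (by omega : x.length = 0)
    have hy : y = [] := by simpa using (by omega : y.length = 0)
    exact ⟨[], 0, 0, by simp [hx], by simp [hy]⟩
  | succ N ih =>
    intro x y hl h
    rcases eq_or_ne x [] with rfl | hx
    · exact ⟨y, 0, 1, by simp, by simp⟩
    rcases eq_or_ne y [] with rfl | hy
    · exact ⟨x, 1, 0, by simp, by simp⟩
    have hx1 : 1 ≤ x.length := List.length_pos_iff.2 hx
    have hy1 : 1 ≤ y.length := List.length_pos_iff.2 hy
    rcases le_total x.length y.length with hxy | hxy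
    · have hpre : y.take x.length = x := by
        have := congrArg (List.take x.length) h
        rw [List.take_left, List.take_append_of_le_length hxy] at this
        exact this.symm
      have hyy : y = x ++ y.drop x.length := by
        conv_lhs => rw [← List.take_append_drop x.length y, hpre]
      have h' : x ++ y.drop x.length = y.drop x.length ++ x := by
        have h2 : x ++ (x ++ y.drop x.length) = (x ++ y.drop x.length) ++ x := by
          rw [← hyy]; exact h
        rw [List.append_assoc] at h2
        exact List.append_cancel_left h2
      have hlen : x.length + (y.drop x.length).length ≤ N := by
        simp only [List.length_drop]; omega
      obtain ⟨t, k, m, htx, hty⟩ := ih x (y.drop x.length) hlen h'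
      refine ⟨t, k, k + m, htx, ?_⟩
      rw [hyy, hty, htx, ← List.flatten_append, ← List.replicate_add]
    · have hpre : x.take y.length = y := by
        have := congrArg (List.take y.length) h.symm
        rw [List.take_left, List.take_append_of_le_length hxy] at this
        exact this.symm
      have hxx : x = y ++ x.drop y.length := by
        conv_lhs => rw [← List.take_append_drop y.length x, hpre]
      have h' : x.drop y.length ++ y = y ++ x.drop y.length := by
        have h2 : y ++ (y ++ x.drop y.length) = (y ++ x.drop y.length) ++ y := by
          rw [← hxx]; exact h.symm
        rw [List.append_assoc] at h2
        exact (List.append_cancel_left h2).symm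
      have hlen : (x.drop y.length).length + y.length ≤ N := by
        simp only [List.length_drop]; omega
      obtain ⟨t, k, m, htx, hty⟩ := ih (x.drop y.length) y hlen h'
      refine ⟨t, m + k, m, ?_, hty⟩
      rw [hxx, htx, hty, ← List.flatten_append, ← List.replicate_add]

lemma flat_split (v : List (α × Bool)) {q n : ℕ} (hq : q ≤ n) :
    (List.replicate n v).flatten =
      (List.replicate q v).flatten ++ (List.replicate (n - q) v).flatten := by
  rw [← List.flatten_append, ← List.replicate_add]
  congr 2
  omega

lemma flat_take (v : List (α × Bool)) {q n : ℕ} (hq : q ≤ n) :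
    ((List.replicate n v).flatten).take (q * v.length) = (List.replicate q v).flatten := by
  rw [flat_split v hq, List.take_left' (len_flat v q)]

lemma flat_drop (v : List (α × Bool)) {q n : ℕ} (hq : q ≤ n) :
    ((List.replicate n v).flatten).drop (q * v.length) = (List.replicate (n - q) v).flatten := by
  rw [flat_split v hq, List.drop_left' (len_flat v q)]

lemma flat_succ (v : List (α × Bool)) (n : ℕ) :
    (List.replicate (n + 1) v).flatten = v ++ (List.replicate n v).flatten := by
  rw [List.replicate_succ, List.flatten_cons]

lemma split_lemma {v zw hw gw : List (α × Bool)} {n : ℕ}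
    (hv : v.length = zw.length) (hL1 : 1 ≤ zw.length)
    (hsplit : (List.replicate n v).flatten = gw ++ (zw ++ hw)) :
    (∃ q, q + 1 ≤ n ∧ gw = (List.replicate q v).flatten ∧ zw = v ∧
        hw = (List.replicate (n - q - 1) v).flatten) ∨
    (∃ r, 0 < r ∧ r < zw.length ∧ zw = v.drop r ++ v.take r) := by
  have hlen : gw.length + (zw.length + hw.length) = n * zw.length := by
    have h0 := congrArg List.length hsplit
    rw [len_flat, hv] at h0
    simp at h0
    omega
  have hq := Nat.div_add_mod gw.length zw.length
  set q := gw.length / zw.length with hqdef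
  set r := gw.length % zw.length with hrdef
  have hr : r < zw.length := Nat.mod_lt _ (by omega)
  have hqn : q + 1 ≤ n := by
    by_contra hcon
    have h2 : n * zw.length ≤ q * zw.length := Nat.mul_le_mul_right _ (by omega)
    have h3 : q * zw.length = zw.length * q := Nat.mul_comm _ _
    omega
  have hjq : gw.length = q * v.length + r := by
    have h3 : q * v.length = zw.length * q := by rw [hv]; ring
    omega
  have hdropj : ((List.replicate n v).flatten).drop gw.length = zw ++ hw := by
    rw [hsplit, List.drop_left]
  have hdd : ((List.replicate n v).flatten).drop gw.length
      = ((List.replicate (n - q) v).flatten).drop r := by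
    rw [hjq, ← List.drop_drop, flat_drop v (by omega : q ≤ n)]
  have hzh : zw ++ hw = ((List.replicate (n - q) v).flatten).drop r := by
    rw [← hdd, hdropj]
  have hweq : zw = (((List.replicate (n - q) v).flatten).drop r).take zw.length := by
    rw [← hzh, List.take_left]
  rcases Nat.eq_zero_or_pos r with hr0 | hrpos
  · left
    have hnq : n - q = (n - q - 1) + 1 := by omega
    refine ⟨q, hqn, ?_, ?_, ?_⟩
    · have h5 : gw = ((List.replicate n v).flatten).take gw.length := by
        rw [hsplit, List.take_left]
      rw [h5, show gw.length = q * v.length from by omega,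
        flat_take v (by omega : q ≤ n)]
    · rw [hweq, hr0, List.drop_zero, hnq, flat_succ,
        List.take_left' hv]
    · have h5 : hw = (zw ++ hw).drop zw.length := by rw [List.drop_left]
      rw [h5, hzh, hr0, List.drop_zero, hnq, flat_succ,
        List.drop_left' hv]
      congr 2
  · right
    have hq2n : q + 2 ≤ n := by
      by_contra hcon
      have h2 : n * zw.length ≤ (q + 1) * zw.length := Nat.mul_le_mul_right _ (by omega)
      have h3 : (q + 1) * zw.length = zw.length * q + zw.length := by ring
      omega
    rw [show n - q = (n - q - 2) + 1 + 1 from by omega, flat_succ,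
      flat_succ] at hweq
    rw [List.drop_append_of_le_length (by omega : r ≤ v.length)] at hweq
    rw [show zw.length = (v.drop r).length + r from by
        simp [List.length_drop]; omega, List.take_length_add_append] at hweq
    rw [List.take_append_of_le_length (by omega : r ≤ v.length)] at hweq
    exact ⟨r, hrpos, hr, hweq⟩


end Stmt8
/-- An element of a free group is cyclically reduced if `|w·w| = 2|w|`. -/
def CyclicallyReduced {α : Type*} [DecidableEq α] (w : FreeGroup α) : Prop :=
  (w * w).toWord.length = 2 * w.toWord.length

/-- An element is a proper power if it is `u ^ n` for some `n ≥ 2`. -/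
def IsProperPower {G : Type*} [Group G] (w : G) : Prop :=
  ∃ (u : G) (n : ℕ), 2 ≤ n ∧ w = u ^ n

/-- Let `z` be a nontrivial, cyclically reduced element of a free group which
is not a proper power. If `z ^ i = g * z * h` with the right-hand side freely reduced, then
`i ≥ 1` and both `g` and `h` are integer powers of `z`. -/
theorem stmt_8 {α : Type*} [DecidableEq α] (z : FreeGroup α)
    (hz : z ≠ 1) (hcyc : CyclicallyReduced z) (hnp : ¬ IsProperPower z)
    (i : ℤ) (g h : FreeGroup α)
    (heq : z ^ i = g * z * h)
    (hred : (g * z * h).toWord.length =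
      g.toWord.length + z.toWord.length + h.toWord.length) :
    1 ≤ i ∧ (∃ k : ℤ, g = z ^ k) ∧ (∃ k : ℤ, h = z ^ k) := by
  classical
  have hcyc' : (z * z).toWord.length = 2 * z.toWord.length := hcyc
  have hL1 : 1 ≤ z.toWord.length := by
    rcases Nat.eq_zero_or_pos z.toWord.length with h0 | h0
    · exact absurd (FreeGroup.toWord_eq_nil_iff.1 (List.length_eq_zero_iff.1 h0)) hz
    · exact h0
  have hGZH : (g * z * h).toWord = g.toWord ++ z.toWord ++ h.toWord := by
    have h1 : (g * z * h).toWord = FreeGroup.reduce (g.toWord ++ z.toWord ++ h.toWord) := by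
      conv_lhs => rw [← FreeGroup.mk_toWord (x := g), ← FreeGroup.mk_toWord (x := z),
        ← FreeGroup.mk_toWord (x := h)]
      rw [FreeGroup.mul_mk, FreeGroup.mul_mk, FreeGroup.toWord_mk]
    refine h1.trans (Stmt8.red_eq_of_length FreeGroup.reduce.red ?_).symm
    rw [← h1, hred]
    simp
    omega
  have h1zz : (z * z).toWord = FreeGroup.reduce (z.toWord ++ z.toWord) := by
    conv_lhs => rw [← FreeGroup.mk_toWord (x := z)]
    rw [FreeGroup.mul_mk, FreeGroup.toWord_mk]
  have hzz : FreeGroup.reduce (z.toWord ++ z.toWord) = z.toWord ++ z.toWord := by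
    refine (Stmt8.red_eq_of_length FreeGroup.reduce.red ?_).symm
    rw [← h1zz, hcyc']
    simp [two_mul]
  have hzzW : (z * z).toWord = z.toWord ++ z.toWord := h1zz.trans hzz
  have hch2 : (z.toWord ++ z.toWord).Chain' Stmt8.Rel := Stmt8.chain'_of_reduce_eq_self hzz
  have hchw : z.toWord.Chain' Stmt8.Rel := hch2.prefix (List.prefix_append _ _)
  rcases lt_trichotomy i 0 with hineg | rfl | hipos
  · -- negative exponent: impossible
    exfalso
    have hzi : z ^ i = (z⁻¹) ^ (-i).toNat := by
      rw [← zpow_natCast, Int.toNat_of_nonneg (by omega : (0:ℤ) ≤ -i), inv_zpow, ← zpow_neg,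
        neg_neg]
    have hiv : (z⁻¹ * z⁻¹).toWord = (z⁻¹).toWord ++ (z⁻¹).toWord := by
      rw [← mul_inv_rev, FreeGroup.toWord_inv, hzzW, Stmt8.invRev_append, ← FreeGroup.toWord_inv]
    have hch2' : ((z⁻¹).toWord ++ (z⁻¹).toWord).Chain' Stmt8.Rel := by
      rw [← hiv]
      exact Stmt8.chain'_of_reduce_eq_self (FreeGroup.reduce_toWord _)
    have hWn := Stmt8.pow_toWord hch2' (-i).toNat
    have hsplit : (List.replicate (-i).toNat (z⁻¹).toWord).flatten =
        g.toWord ++ (z.toWord ++ h.toWord) := by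
      rw [← hWn, ← hzi, heq, hGZH, List.append_assoc]
    have hvlen : (z⁻¹).toWord.length = z.toWord.length := by
      rw [FreeGroup.toWord_inv, FreeGroup.invRev_length]
    rcases Stmt8.split_lemma hvlen hL1 hsplit with ⟨q, hqn, hg, hzv, hh⟩ | ⟨r, hr0, hrL, hzr⟩
    · have hinv : FreeGroup.invRev z.toWord = z.toWord := by
        rw [← FreeGroup.toWord_inv, ← hzv]
      have := Stmt8.eq_nil_of_invRev_eq hchw hinv
      rw [this] at hL1
      simp at hL1
    · have hchw' : (z⁻¹).toWord.Chain' Stmt8.Rel :=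
        Stmt8.chain'_of_reduce_eq_self (FreeGroup.reduce_toWord _)
      have h2 : FreeGroup.invRev z.toWord =
          FreeGroup.invRev ((z⁻¹).toWord.take r) ++ FreeGroup.invRev ((z⁻¹).toWord.drop r) := by
        conv_lhs => rw [hzr]
        rw [Stmt8.invRev_append]
      have h3 : (z⁻¹).toWord.take r ++ (z⁻¹).toWord.drop r =
          FreeGroup.invRev ((z⁻¹).toWord.take r) ++ FreeGroup.invRev ((z⁻¹).toWord.drop r) := by
        rw [List.take_append_drop, ← h2, FreeGroup.toWord_inv]
      have h4 := List.append_inj h3 (by rw [FreeGroup.invRev_length])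
      have h5 : ((z⁻¹).toWord.take r).Chain' Stmt8.Rel :=
        hchw'.prefix (List.take_prefix _ _)
      have h6 := Stmt8.eq_nil_of_invRev_eq h5 h4.1.symm
      have h7 := congrArg List.length h6
      rw [List.length_take, hvlen, List.length_nil] at h7
      omega
  · -- zero exponent: impossible
    exfalso
    have := hred
    rw [← heq] at this
    rw [zpow_zero] at this
    rw [FreeGroup.toWord_one] at this
    simp at this
    omega
  · -- positive exponent
    have hzi : z ^ i = z ^ i.toNat := by
      rw [← zpow_natCast, Int.toNat_of_nonneg hipos.le]
    have hWn := Stmt8.pow_toWord hch2 i.toNat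
    have hsplit : (List.replicate i.toNat z.toWord).flatten =
        g.toWord ++ (z.toWord ++ h.toWord) := by
      rw [← hWn, ← hzi, heq, hGZH, List.append_assoc]
    rcases Stmt8.split_lemma rfl hL1 hsplit with ⟨q, hqn, hg, _, hh⟩ | ⟨r, hr0, hrL, hzr⟩
    · refine ⟨by omega, ⟨(q : ℤ), ?_⟩, ⟨((i.toNat - q - 1 : ℕ) : ℤ), ?_⟩⟩
      · rw [zpow_natCast]
        exact FreeGroup.toWord_injective (by rw [hg, Stmt8.pow_toWord hch2])
      · rw [zpow_natCast]
        exact FreeGroup.toWord_injective (by rw [hh, Stmt8.pow_toWord hch2])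
    · exfalso
      apply hnp
      have hc : z.toWord.take r ++ z.toWord.drop r = z.toWord.drop r ++ z.toWord.take r := by
        rw [List.take_append_drop]
        exact hzr
      obtain ⟨t, k, m, htx, hty⟩ := Stmt8.comm_aux _ _ _ le_rfl hc
      have hlt : (z.toWord.take r).length = r := by
        rw [List.length_take]
        omega
      have hld : 0 < (z.toWord.drop r).length := by
        rw [List.length_drop]
        omega
      have hlx := congrArg List.length htx
      rw [hlt, Stmt8.len_flat] at hlx
      have hly := congrArg List.length hty
      rw [Stmt8.len_flat] at hly
      have htk : 1 ≤ k := by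
        by_contra hcon
        have hk0 : k = 0 := by omega
        rw [hk0] at hlx
        simp at hlx
        omega
      have htm : 1 ≤ m := by
        by_contra hcon
        have hm0 : m = 0 := by omega
        rw [hm0] at hly
        simp at hly
        omega
      have hwt : z.toWord = (List.replicate (k + m) t).flatten := by
        conv_lhs => rw [← List.take_append_drop r z.toWord]
        rw [htx, hty, ← List.flatten_append, ← List.replicate_add]
      refine ⟨FreeGroup.mk t, k + m, by omega, ?_⟩
      have hfin : (FreeGroup.mk t) ^ (k + m) = FreeGroup.mk z.toWord := by
        rw [Stmt8.mk_pow, ← hwt]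
      rw [hfin, FreeGroup.mk_toWord]
end

section
/- Let z ∈ F(Σ) be a nontrivial, cyclically reduced element that is not a proper power, and let y ∈ F(Σ) with y ≠ 1 be such that the expression y⁻¹·z·y is freely reduced. If i, j are nonzero integers and g, h ∈ F(Σ) are such that y⁻¹·z^i·y = g·(y⁻¹·z^j·y)·h and the expression g·y⁻¹·z^j·y·h is freely reduced, then g = h = 1 and i = j. -/
set_option linter.unusedSectionVars false
set_option maxHeartbeats 1000000

namespace Stmt9

variable {α : Type*}

/-- inverse of a letter -/
def ivl (a : α × Bool) : α × Bool := (a.1, !a.2)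

lemma ivl_ivl (a : α × Bool) : ivl (ivl a) = a := by simp [ivl]

lemma ne_ivl_self (a : α × Bool) : a ≠ ivl a := by
  simp [ivl, Prod.ext_iff]

/-- no-cancellation relation between consecutive letters -/
def RP (a b : α × Bool) : Prop := ¬ (a.1 = b.1 ∧ a.2 = !b.2)

lemma rp_iff {a b : α × Bool} : RP a b ↔ a ≠ ivl b := by
  constructor
  · intro h he; exact h (by simp [he, ivl])
  · intro h hc; exact h (Prod.ext hc.1 (by simp [hc.2, ivl]))

def Reduced (l : List (α × Bool)) : Prop := List.Chain' RP l

lemma red_get {l : List (α × Bool)} (h : Reduced l) (p : ℕ) (hp : p + 1 < l.length) :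
    RP (l[p]'(by omega)) (l[p+1]'hp) := by
  have := List.isChain_iff_getElem.mp h p (by omega)
  simpa using this

section DecEq
variable [DecidableEq α]

lemma reduce_eq_self {l : List (α × Bool)} (h : Reduced l) : FreeGroup.reduce l = l := by
  induction l with
  | nil => rfl
  | cons x l ih =>
    have ht : Reduced l := List.IsChain.tail (l := x :: l) h
    rw [FreeGroup.reduce.cons, ih ht]
    cases l with
    | nil => rfl
    | cons y t =>
      have hxy : RP x y := (List.isChain_cons_cons.mp h).1
      simp only [RP] at hxy
      simp [hxy]

lemma reduced_reduce (l : List (α × Bool)) : Reduced (FreeGroup.reduce l) := by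
  induction l with
  | nil => exact List.isChain_nil
  | cons x l ih =>
    rw [FreeGroup.reduce.cons]
    rcases hr : FreeGroup.reduce l with _ | ⟨y, t⟩
    · exact List.isChain_singleton x
    · rw [hr] at ih
      by_cases hc : x.1 = y.1 ∧ x.2 = !y.2
      · have ht : Reduced t := List.IsChain.tail (l := y :: t) ih
        simpa [hc] using ht
      · have : Reduced (x :: y :: t) := List.isChain_cons_cons.mpr ⟨hc, ih⟩
        simpa [hc] using this

lemma reduced_toWord (x : FreeGroup α) : Reduced x.toWord := by
  rw [← FreeGroup.reduce_toWord]; exact reduced_reduce _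

lemma toWord_mk_reduced {l : List (α × Bool)} (h : Reduced l) :
    (FreeGroup.mk l).toWord = l := by
  rw [FreeGroup.toWord_mk]; exact reduce_eq_self h

lemma mul_toWord_eq (u v : FreeGroup α)
    (h : (u * v).toWord.length = u.toWord.length + v.toWord.length) :
    (u * v).toWord = u.toWord ++ v.toWord :=
  (FreeGroup.toWord_mul_sublist u v).eq_of_length (by simp [h])

lemma length_mul_le (u v : FreeGroup α) :
    (u * v).toWord.length ≤ u.toWord.length + v.toWord.length := by
  simpa using (FreeGroup.toWord_mul_sublist u v).length_le

end DecEq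

/-- repeated word -/
def rep (n : ℕ) (l : List (α × Bool)) : List (α × Bool) := (List.replicate n l).flatten

lemma rep_succ (n : ℕ) (l : List (α × Bool)) : rep (n + 1) l = l ++ rep n l := by
  simp [rep, List.replicate_succ]

lemma rep_succ' (n : ℕ) (l : List (α × Bool)) : rep (n + 1) l = rep n l ++ l := by
  induction n with
  | zero => simp [rep]
  | succ k ih =>
    rw [rep_succ (k+1) l]
    conv_lhs => rw [ih]
    rw [rep_succ k l, List.append_assoc]

@[simp] lemma rep_length (n : ℕ) (l : List (α × Bool)) : (rep n l).length = n * l.length := by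
  induction n with
  | zero => simp [rep]
  | succ n ih => rw [rep_succ]; simp [ih]; ring

lemma rep_get (l : List (α × Bool)) (hm : 0 < l.length) (n p : ℕ) (hp : p < n * l.length) :
    (rep n l)[p]'(by simpa using hp) = l[p % l.length]'(Nat.mod_lt _ hm) := by
  induction n generalizing p with
  | zero => omega
  | succ n ih =>
    have hrw : rep (n + 1) l = l ++ rep n l := rep_succ n l
    by_cases hpl : p < l.length
    · rw [List.getElem_of_eq hrw, List.getElem_append_left hpl]
      congr 1
      exact (Nat.mod_eq_of_lt hpl).symm
    · push_neg at hpl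
      have hp' : p - l.length < n * l.length := by
        have h2 : (n + 1) * l.length = n * l.length + l.length := by ring
        omega
      rw [List.getElem_of_eq hrw, List.getElem_append_right hpl]
      rw [ih _ hp']
      congr 1
      conv_rhs => rw [show p = p - l.length + l.length by omega]
      rw [Nat.add_mod_right]

lemma rep_ne_nil {n : ℕ} {l : List (α × Bool)} (hl : l ≠ []) (hn : 1 ≤ n) : rep n l ≠ [] := by
  obtain ⟨k, rfl⟩ : ∃ k, n = k + 1 := ⟨n - 1, by omega⟩
  rw [rep_succ]
  simp [hl]

lemma rep_head? {n : ℕ} {l : List (α × Bool)} (hl : l ≠ []) (hn : 1 ≤ n) :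
    (rep n l).head? = l.head? := by
  obtain ⟨k, rfl⟩ : ∃ k, n = k + 1 := ⟨n - 1, by omega⟩
  rw [rep_succ, List.head?_append_of_ne_nil _ hl]

lemma rep_getLast? {n : ℕ} {l : List (α × Bool)} (hl : l ≠ []) (hn : 1 ≤ n) :
    (rep n l).getLast? = l.getLast? := by
  induction n with
  | zero => omega
  | succ k ih =>
    rw [rep_succ]
    rcases Nat.eq_or_lt_of_le (Nat.zero_le k) with hk | hk
    · rw [← hk]; simp [rep]
    · rw [List.getLast?_append_of_ne_nil _ (rep_ne_nil hl hk), ih hk]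

lemma reduced_rep {l : List (α × Bool)} (hZZ : Reduced (l ++ l)) (n : ℕ) :
    Reduced (rep n l) := by
  by_cases hl : l = []
  · subst hl; simp only [rep, List.flatten_replicate_nil]; exact List.isChain_nil
  obtain ⟨hc, -, hj⟩ := List.isChain_append.mp hZZ
  induction n with
  | zero => exact List.isChain_nil
  | succ k ih =>
    rw [rep_succ]
    refine List.isChain_append.mpr ⟨hc, ih, ?_⟩
    intro x hx y hy
    rcases Nat.eq_or_lt_of_le (Nat.zero_le k) with hk | hk
    · rw [← hk] at hy; simp [rep] at hy
    · rw [rep_head? hl hk] at hy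
      exact hj x hx y hy

lemma reduced_sandwich {A l B : List (α × Bool)} (hl : l ≠ []) {n : ℕ} (hn : 1 ≤ n)
    (h : Reduced (A ++ l ++ B)) (hZZ : Reduced (l ++ l)) :
    Reduced (A ++ rep n l ++ B) := by
  obtain ⟨hAl, hB, hj2⟩ := List.isChain_append.mp h
  obtain ⟨hA, hcl, hj1⟩ := List.isChain_append.mp hAl
  rw [List.getLast?_append_of_ne_nil _ hl] at hj2
  refine List.isChain_append.mpr ⟨List.isChain_append.mpr ⟨hA, reduced_rep hZZ n, ?_⟩, hB, ?_⟩
  · intro x hx y hy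
    rw [rep_head? hl hn] at hy
    exact hj1 x hx y hy
  · intro x hx y hy
    rw [List.getLast?_append_of_ne_nil _ (rep_ne_nil hl hn), rep_getLast? hl hn] at hx
    exact hj2 x hx y hy

lemma invRev_append (a b : List (α × Bool)) :
    FreeGroup.invRev (a ++ b) = FreeGroup.invRev b ++ FreeGroup.invRev a := by
  simp [FreeGroup.invRev]

lemma invRev_rep (n : ℕ) (l : List (α × Bool)) :
    FreeGroup.invRev (rep n l) = rep n (FreeGroup.invRev l) := by
  induction n with
  | zero => simp [rep, FreeGroup.invRev]
  | succ k ih =>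
    rw [rep_succ, invRev_append, ih, rep_succ']

lemma invRev_get (l : List (α × Bool)) (p : ℕ) (hp : p < l.length) :
    (FreeGroup.invRev l)[p]'(by rw [FreeGroup.invRev_length]; exact hp)
      = ivl (l[l.length - 1 - p]'(by omega)) := by
  simp only [FreeGroup.invRev, List.getElem_reverse, List.getElem_map]
  simp [ivl, List.length_map]

/-- A nontrivial period (rotation-invariance) makes a word a proper power. -/
lemma rot_proper_power {Z : List (α × Bool)} (hm : 0 < Z.length) (s : ℕ) (hs : 0 < s)
    (hsm : s < Z.length)
    (hper : ∀ k (hk : k < Z.length),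
      Z[(k + s) % Z.length]'(Nat.mod_lt _ hm) = Z[k]'hk) :
    ∃ (P : List (α × Bool)) (c : ℕ), 2 ≤ c ∧ Z = rep c P := by
  set m := Z.length with hmdef
  set f : ℕ → α × Bool := fun k => Z[k % m]'(Nat.mod_lt _ hm) with hf
  have hf_per : ∀ k, f (k + s) = f k := by
    intro k
    show Z[(k + s) % m]'_ = Z[k % m]'_
    have h1 : (k + s) % m = (k % m + s) % m := by
      conv_lhs => rw [← Nat.mod_add_mod]
    have h2 := hper (k % m) (Nat.mod_lt _ hm)
    simp only [h1]
    exact h2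
  have hf_mul : ∀ a k, f (k + s * a) = f k := by
    intro a
    induction a with
    | zero => simp
    | succ b ih =>
      intro k
      have : k + s * (b + 1) = (k + s * b) + s := by ring
      rw [this, hf_per, ih]
  have hf_m : ∀ k, f (k + m) = f k := by
    intro k; show Z[(k + m) % m]'_ = Z[k % m]'_
    simp [Nat.add_mod_right]
  have hf_mm : ∀ a k, f (k + m * a) = f k := by
    intro a
    induction a with
    | zero => simp
    | succ b ih =>
      intro k
      have : k + m * (b + 1) = (k + m * b) + m := by ring
      rw [this, hf_m, ih]
  set d := Nat.gcd s m with hd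
  have hd0 : 0 < d := Nat.gcd_pos_of_pos_left _ hs
  have hdm : d ∣ m := Nat.gcd_dvd_right s m
  have hds : d ∣ s := Nat.gcd_dvd_left s m
  have hdlt : d < m := lt_of_le_of_lt (Nat.le_of_dvd hs hds) hsm
  set e := s / d with he
  set q := m / d with hq
  have hdq : d * q = m := Nat.mul_div_cancel' hdm
  have hq2 : 2 ≤ q := by
    rcases Nat.lt_or_ge q 2 with h | h
    · interval_cases q <;> omega
    · exact h
  have hcop : Nat.Coprime e q := Nat.coprime_div_gcd_div_gcd hd0
  obtain ⟨b, -, hb⟩ := Nat.exists_mul_mod_eq_one_of_coprime hcop (by omega)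
  -- s * b = m * c + d
  have hsb : s * b = m * ((e * b) / q) + d := by
    have h1 : e * b = q * ((e * b) / q) + 1 := by
      conv_lhs => rw [← Nat.div_add_mod (e * b) q]
      rw [hb]
    have h2 : d * e = s := Nat.mul_div_cancel' hds
    calc s * b = d * (e * b) := by rw [← h2]; ring
    _ = d * (q * ((e * b) / q) + 1) := by rw [← h1]
    _ = (d * q) * ((e * b) / q) + d := by ring
    _ = m * ((e * b) / q) + d := by rw [hdq]
  have hf_d : ∀ k, f (k + d) = f k := by
    intro k
    have h1 : f (k + d + m * ((e * b) / q)) = f (k + d) := hf_mm _ _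
    have h2 : k + d + m * ((e * b) / q) = k + s * b := by rw [hsb]; ring
    rw [h2] at h1
    rw [← h1, hf_mul]
  have hfd_mod : ∀ k, f k = f (k % d) := by
    intro k
    induction k using Nat.strong_induction_on with
    | _ k ih =>
      rcases Nat.lt_or_ge k d with h | h
      · rw [Nat.mod_eq_of_lt h]
      · have h1 : f (k - d + d) = f (k - d) := hf_d _
        have h2 : k - d + d = k := by omega
        rw [h2] at h1
        rw [h1, ih (k - d) (by omega)]
        congr 1
        conv_rhs => rw [show k = k - d + d by omega]
        rw [Nat.add_mod_right]
  refine ⟨Z.take d, q, hq2, ?_⟩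
  have hlen : (rep q (Z.take d)).length = m := by
    rw [rep_length, List.length_take, min_eq_left (by omega), mul_comm]
    exact hdq
  have hdZ : d < Z.length := hdlt
  apply List.ext_getElem (by omega)
  intro n h1 h2
  have htl : (Z.take d).length = d := by rw [List.length_take]; omega
  have h3 : n < q * (Z.take d).length := by rw [htl, mul_comm]; have := hdq; omega
  rw [rep_get _ (by omega) q n h3, List.getElem_take]
  have gc : ∀ {i jj : ℕ} (e : i = jj) (hh : i < Z.length), Z[i]'hh = Z[jj]'(e ▸ hh) := by
    intro i jj e hh; subst e; rfl
  have e0 : n % (Z.take d).length = n % d := by rw [htl]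
  have h5 : n % d < d := Nat.mod_lt _ hd0
  have e2 : (n % d) % m = n % d := Nat.mod_eq_of_lt (lt_trans h5 hdlt)
  have e1 : n % m = n := Nat.mod_eq_of_lt h1
  have key : f n = f (n % d) := hfd_mod n
  simp only [hf] at key
  rw [gc e0 _, gc e2.symm _, ← key, gc e1 _]


/-- an "inverted copy" of `Z` cannot occur inside a power of `Z`. -/
lemma no_inverted_occurrence {Z : List (α × Bool)} (hm : 0 < Z.length)
    (hZZ : Reduced (Z ++ Z)) (t : ℕ)
    (hocc : ∀ k (hk : k < Z.length),
      Z[(t + k) % Z.length]'(Nat.mod_lt _ hm) = ivl (Z[Z.length - 1 - k]'(by omega))) :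
    False := by
  set m := Z.length with hmdef
  haveI : NeZero m := ⟨by omega⟩
  set f : ZMod m → α × Bool := fun x => Z[x.val]'(ZMod.val_lt x) with hf
  -- cyclic adjacency
  have cyc : ∀ x : ZMod m, RP (f x) (f (x + 1)) := by
    intro x
    have hx : x.val < m := ZMod.val_lt x
    have hadd : (x + 1).val = (x.val + 1 % m) % m := by
      rw [ZMod.val_add, ZMod.val_one_eq_one_mod]
    rcases Nat.lt_or_ge (x.val + 1) m with h | h
    · have hm2 : 2 ≤ m := by omega
      have h2 : (x + 1).val = x.val + 1 := by
        rw [hadd, Nat.mod_eq_of_lt hm2, Nat.mod_eq_of_lt h]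
      have h3 : x.val + 1 < (Z ++ Z).length := by simp; omega
      have := red_get hZZ x.val h3
      rw [List.getElem_append_left hx, List.getElem_append_left (by omega)] at this
      show RP (Z[x.val]'_) (Z[(x+1).val]'_)
      have gc : ∀ {i jj : ℕ} (e : i = jj) (hh : i < Z.length) (hh2 : jj < Z.length),
          Z[i]'hh = Z[jj]'hh2 := by intro i jj e hh hh2; subst e; rfl
      rw [gc h2 (ZMod.val_lt _) (by omega)]
      exact this
    · have hxm : x.val = m - 1 := by omega
      have h2 : (x + 1).val = 0 := by
        rcases Nat.eq_or_lt_of_le (Nat.one_le_iff_ne_zero.mpr (NeZero.ne m)) with hm1 | hm1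
        · have hv : x.val = 0 := by omega
          rw [hadd, hv, ← hm1]
        · rw [hadd, Nat.mod_eq_of_lt hm1, show x.val + 1 = m by omega, Nat.mod_self]
      have h3 : (m - 1) + 1 < (Z ++ Z).length := by simp; omega
      have := red_get hZZ (m - 1) h3
      rw [List.getElem_append_left (by omega)] at this
      have h4 : (Z ++ Z)[(m - 1) + 1]'(by simp; omega) = Z[0]'(by omega) := by
        rw [List.getElem_append_right (by omega)]
        congr 1
        omega
      rw [h4] at this
      show RP (Z[x.val]'_) (Z[(x+1).val]'_)
      have gc : ∀ {i jj : ℕ} (e : i = jj) (hh : i < Z.length) (hh2 : jj < Z.length),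
          Z[i]'hh = Z[jj]'hh2 := by intro i jj e hh hh2; subst e; rfl
      rw [gc hxm (ZMod.val_lt _) (by omega), gc h2 (ZMod.val_lt _) (by omega)]
      exact this
  -- translated occurrence equation
  have hocc' : ∀ x : ZMod m, f ((t : ZMod m) + x) = ivl (f (-1 - x)) := by
    intro x
    have gc : ∀ {i jj : ℕ} (e : i = jj) (hh : i < Z.length) (hh2 : jj < Z.length),
        Z[i]'hh = Z[jj]'hh2 := by intro i jj e hh hh2; subst e; rfl
    obtain ⟨k, hk, hxk⟩ : ∃ k, k < m ∧ ((k : ℕ) : ZMod m) = x :=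
      ⟨x.val, ZMod.val_lt x, ZMod.natCast_rightInverse x⟩
    have h2 : ((m - 1 - k : ℕ) : ZMod m) = -1 - x := by
      have hsum : ((m - 1 - k : ℕ) : ZMod m) + ((k : ℕ) : ZMod m) + 1 = ((m : ℕ) : ZMod m) := by
        rw [← Nat.cast_one (R := ZMod m), ← Nat.cast_add, ← Nat.cast_add]
        congr 1
        omega
      rw [hxk, ZMod.natCast_self] at hsum
      linear_combination hsum
    have h3 : (-1 - x).val = m - 1 - k := by
      rw [← h2]
      exact ZMod.val_cast_of_lt (by omega)
    have h1 : ((t : ZMod m) + x).val = (t + k) % m := by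
      rw [ZMod.val_add, ZMod.val_natCast, ← hxk, ZMod.val_cast_of_lt hk, Nat.mod_add_mod]
    have hky := hocc k hk
    show Z[((t : ZMod m) + x).val]'_ = ivl (Z[(-1 - x).val]'_)
    rw [gc h1 (ZMod.val_lt _) (Nat.mod_lt _ hm), gc h3 (ZMod.val_lt _) (by omega)]
    exact hky
  -- recentered equation
  set c : ZMod m := (t : ZMod m) - 1 with hc
  have geq : ∀ u : ZMod m, f u = ivl (f (c - u)) := by
    intro u
    have := hocc' (u - (t : ZMod m))
    have e1 : (t : ZMod m) + (u - (t : ZMod m)) = u := by ring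
    have e2 : -1 - (u - (t : ZMod m)) = c - u := by rw [hc]; ring
    rw [e1, e2] at this
    exact this
  -- doubling
  have hdouble : ∃ x : ZMod m, 2 * x = c ∨ 2 * x = c - 1 := by
    rcases Nat.even_or_odd c.val with ⟨k, hk⟩ | ⟨k, hk⟩
    · refine ⟨(k : ZMod m), Or.inl ?_⟩
      have : ((c.val : ℕ) : ZMod m) = c := ZMod.natCast_rightInverse c
      rw [← this, hk]
      push_cast
      ring
    · refine ⟨(k : ZMod m), Or.inr ?_⟩
      have h4 : ((c.val : ℕ) : ZMod m) = c := ZMod.natCast_rightInverse c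
      rw [← h4, hk]
      push_cast
      ring
  obtain ⟨x, hx | hx⟩ := hdouble
  · have h5 : c - x = x := by rw [← hx]; ring
    have := geq x
    rw [h5] at this
    exact ne_ivl_self _ this
  · have h5 : c - x = x + 1 := by linear_combination -hx
    have h7 := geq x
    rw [h5] at h7
    exact (rp_iff.mp (cyc x)) h7


variable [DecidableEq α]

lemma main_pos (z y : FreeGroup α)
    (hz : z ≠ 1) (hcyc : (z * z).toWord.length = 2 * z.toWord.length)
    (hnp : ¬ ∃ (u : FreeGroup α) (n : ℕ), 2 ≤ n ∧ z = u ^ n)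
    (hy : y ≠ 1)
    (hyzy : (y⁻¹ * z * y).toWord.length =
      y⁻¹.toWord.length + z.toWord.length + y.toWord.length)
    (i j : ℤ) (hi : 0 < i) (hj : j ≠ 0) (g h : FreeGroup α)
    (heq : y⁻¹ * z ^ i * y = g * (y⁻¹ * z ^ j * y) * h)
    (hred : (g * (y⁻¹ * (z ^ j) * y) * h).toWord.length =
      g.toWord.length + y⁻¹.toWord.length + (z ^ j).toWord.length
        + y.toWord.length + h.toWord.length) :
    g = 1 ∧ h = 1 ∧ i = j := by
  have hZne : z.toWord ≠ [] := fun hn => hz (FreeGroup.toWord_eq_nil_iff.mp hn)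
  have hm : 0 < z.toWord.length := List.length_pos_iff.mpr hZne
  have hYne : y.toWord ≠ [] := fun hn => hy (FreeGroup.toWord_eq_nil_iff.mp hn)
  have hqp : 0 < y.toWord.length := List.length_pos_iff.mpr hYne
  have hY' : y⁻¹.toWord = FreeGroup.invRev y.toWord := FreeGroup.toWord_inv y
  have hq' : y⁻¹.toWord.length = y.toWord.length := by
    rw [hY', FreeGroup.invRev_length]
  have hZZ : (z * z).toWord = z.toWord ++ z.toWord := mul_toWord_eq _ _ (by omega)
  have hZZred : Reduced (z.toWord ++ z.toWord) := hZZ ▸ reduced_toWord _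
  have e1 : (y⁻¹ * z).toWord.length = y⁻¹.toWord.length + z.toWord.length := by
    have l1 := length_mul_le (y⁻¹ * z) y
    have l2 := length_mul_le y⁻¹ z
    omega
  have e2 : (y⁻¹ * z * y).toWord.length = (y⁻¹ * z).toWord.length + y.toWord.length := by
    have l1 := length_mul_le (y⁻¹ * z) y
    have l2 := length_mul_le y⁻¹ z
    omega
  have hW1 : (y⁻¹ * z * y).toWord = y⁻¹.toWord ++ z.toWord ++ y.toWord := by
    rw [mul_toWord_eq _ _ e2, mul_toWord_eq _ _ e1]
  have hW1red : Reduced (y⁻¹.toWord ++ z.toWord ++ y.toWord) := hW1 ▸ reduced_toWord _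
  have hzmk : z = FreeGroup.mk z.toWord := FreeGroup.mk_toWord.symm
  have hpow : ∀ n : ℕ, (z ^ n).toWord = rep n z.toWord := by
    intro n
    have hzn : z ^ n = FreeGroup.mk (rep n z.toWord) := by
      simp only [rep]
      rw [← FreeGroup.pow_mk, ← hzmk]
    rw [hzn, toWord_mk_reduced (reduced_rep hZZred n)]
  have hconj : ∀ n : ℕ, 1 ≤ n → (y⁻¹ * z ^ n * y).toWord
      = y⁻¹.toWord ++ rep n z.toWord ++ y.toWord := by
    intro n hn
    have hmk : FreeGroup.mk (y⁻¹.toWord ++ rep n z.toWord ++ y.toWord)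
        = y⁻¹ * z ^ n * y := by
      simp only [rep]
      rw [← FreeGroup.mul_mk, ← FreeGroup.mul_mk, ← FreeGroup.pow_mk,
        FreeGroup.mk_toWord, FreeGroup.mk_toWord, FreeGroup.mk_toWord]
    rw [← hmk, toWord_mk_reduced (reduced_sandwich hZne hn hW1red hZZred)]
  -- exponents as naturals
  set ni := i.toNat with hnidef
  have hni1 : 1 ≤ ni := by omega
  have hii : z ^ i = z ^ (ni : ℕ) := by
    rw [← zpow_natCast]
    congr 1
    omega
  set nj := j.natAbs with hnjdef
  have hnj1 : 1 ≤ nj := by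
    have := Int.natAbs_pos.mpr hj
    omega
  -- the word of the left-hand side
  have hLw : (y⁻¹ * z ^ i * y).toWord
      = y⁻¹.toWord ++ rep ni z.toWord ++ y.toWord := by
    rw [hii]; exact hconj ni hni1
  -- decompose the right-hand side using freeness of the product
  have e_gw : ((g * (y⁻¹ * (z ^ j) * y)).toWord.length)
      = g.toWord.length + (y⁻¹ * (z ^ j) * y).toWord.length := by
    have l1 := length_mul_le (g * (y⁻¹ * (z ^ j) * y)) h
    have l2 := length_mul_le g (y⁻¹ * (z ^ j) * y)
    have l3 := length_mul_le (y⁻¹ * (z ^ j)) y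
    have l4 := length_mul_le y⁻¹ (z ^ j)
    have l5 := length_mul_le (y⁻¹ * (z ^ j)) y
    omega
  have e_gwh : ((g * (y⁻¹ * (z ^ j) * y) * h).toWord.length)
      = (g * (y⁻¹ * (z ^ j) * y)).toWord.length + h.toWord.length := by
    have l1 := length_mul_le (g * (y⁻¹ * (z ^ j) * y)) h
    have l2 := length_mul_le g (y⁻¹ * (z ^ j) * y)
    have l3 := length_mul_le (y⁻¹ * (z ^ j)) y
    have l4 := length_mul_le y⁻¹ (z ^ j)
    omega
  have e_w : (y⁻¹ * (z ^ j) * y).toWord.length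
      = (y⁻¹ * (z ^ j)).toWord.length + y.toWord.length := by
    have l1 := length_mul_le (g * (y⁻¹ * (z ^ j) * y)) h
    have l2 := length_mul_le g (y⁻¹ * (z ^ j) * y)
    have l3 := length_mul_le (y⁻¹ * (z ^ j)) y
    have l4 := length_mul_le y⁻¹ (z ^ j)
    omega
  have e_yz : (y⁻¹ * (z ^ j)).toWord.length = y⁻¹.toWord.length + (z ^ j).toWord.length := by
    have l1 := length_mul_le (g * (y⁻¹ * (z ^ j) * y)) h
    have l2 := length_mul_le g (y⁻¹ * (z ^ j) * y)
    have l3 := length_mul_le (y⁻¹ * (z ^ j)) y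
    have l4 := length_mul_le y⁻¹ (z ^ j)
    omega
  have hE : y⁻¹.toWord ++ rep ni z.toWord ++ y.toWord
      = g.toWord ++ y⁻¹.toWord ++ (z ^ j).toWord ++ y.toWord ++ h.toWord := by
    have h0 : (g * (y⁻¹ * (z ^ j) * y) * h).toWord
        = g.toWord ++ (y⁻¹.toWord ++ (z ^ j).toWord ++ y.toWord) ++ h.toWord := by
      rw [mul_toWord_eq _ _ e_gwh, mul_toWord_eq _ _ e_gw, mul_toWord_eq _ _ e_w,
        mul_toWord_eq _ _ e_yz]
    have h1 : (y⁻¹ * z ^ i * y).toWord = (g * (y⁻¹ * (z ^ j) * y) * h).toWord := by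
      rw [heq]
    rw [hLw, h0] at h1
    rw [h1]
    simp [List.append_assoc]
  have gcongr : ∀ {l : List (α × Bool)} {a b : ℕ} (e : a = b) (ha : a < l.length),
      l[a]'ha = l[b]'(e ▸ ha) := by
    intro l a b e ha; subst e; rfl
  have hjlen : (z ^ j).toWord.length = nj * z.toWord.length := by
    rcases lt_or_gt_of_ne hj with hneg | hpos
    · have hzj : z ^ j = (z ^ (nj : ℕ))⁻¹ := by
        rw [← zpow_natCast, ← zpow_neg]
        congr 1
        omega
      rw [hzj, FreeGroup.toWord_inv, FreeGroup.invRev_length, hpow, rep_length]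
    · have hzj : z ^ j = z ^ (nj : ℕ) := by
        rw [← zpow_natCast]
        congr 1
        omega
      rw [hzj, hpow, rep_length]
  have hmnj : z.toWord.length ≤ nj * z.toWord.length := Nat.le_mul_of_pos_left _ hnj1
  have hkey : ni * z.toWord.length
      = g.toWord.length + nj * z.toWord.length + h.toWord.length := by
    have hlc := congrArg List.length hE
    simp only [List.length_append, rep_length, hjlen, hq'] at hlc
    omega
  have hminim : z.toWord.length ≤ ni * z.toWord.length := Nat.le_mul_of_pos_left _ hni1
  have hGYlen : (g.toWord ++ y⁻¹.toWord).length = g.toWord.length + y.toWord.length := by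
    simp [hq']
  have hOCC : ∀ k, (hk : k < z.toWord.length) →
      z.toWord[(g.toWord.length + k) % z.toWord.length]'(Nat.mod_lt _ hm)
        = (z ^ j).toWord[k]'(by omega) := by
    intro k hk
    have h1 : g.toWord.length + y.toWord.length + k
        < (y⁻¹.toWord ++ rep ni z.toWord ++ y.toWord).length := by
      simp only [List.length_append, rep_length, hq']
      omega
    have step := List.getElem_of_eq hE h1
    -- left side
    have e1' : g.toWord.length + y.toWord.length + k
        < (y⁻¹.toWord ++ rep ni z.toWord).length := by
      simp only [List.length_append, rep_length, hq']
      omega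
    have e2' : y⁻¹.toWord.length ≤ g.toWord.length + y.toWord.length + k := by omega
    rw [List.getElem_append_left e1', List.getElem_append_right e2'] at step
    have e3' : g.toWord.length + y.toWord.length + k - y⁻¹.toWord.length
        = g.toWord.length + k := by omega
    rw [gcongr e3' _] at step
    have e4' : g.toWord.length + k < ni * z.toWord.length := by omega
    rw [rep_get z.toWord hm ni _ e4'] at step
    -- right side
    have f1 : g.toWord.length + y.toWord.length + k
        < (g.toWord ++ y⁻¹.toWord ++ (z ^ j).toWord ++ y.toWord).length := by
      simp only [List.length_append, hjlen, hq']
      omega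
    have f2 : g.toWord.length + y.toWord.length + k
        < (g.toWord ++ y⁻¹.toWord ++ (z ^ j).toWord).length := by
      simp only [List.length_append, hjlen, hq']
      omega
    have f3 : (g.toWord ++ y⁻¹.toWord).length ≤ g.toWord.length + y.toWord.length + k := by
      omega
    rw [List.getElem_append_left f1, List.getElem_append_left f2,
      List.getElem_append_right f3] at step
    have f4 : g.toWord.length + y.toWord.length + k - (g.toWord ++ y⁻¹.toWord).length
        = k := by omega
    rw [gcongr f4 _] at step
    exact step
  rcases lt_or_gt_of_ne hj with hjneg | hjpos
  · -- j < 0 : impossible (an inverted copy of z would occur in a power of z)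
    exfalso
    have hzj : z ^ j = (z ^ (nj : ℕ))⁻¹ := by
      rw [← zpow_natCast, ← zpow_neg]
      congr 1
      omega
    have hjw : (z ^ j).toWord = rep nj (FreeGroup.invRev z.toWord) := by
      rw [hzj, FreeGroup.toWord_inv, hpow, invRev_rep]
    have hZ'len : (FreeGroup.invRev z.toWord).length = z.toWord.length :=
      FreeGroup.invRev_length
    apply no_inverted_occurrence hm hZZred g.toWord.length
    intro k hk
    have hstep := hOCC k hk
    simp only [hjw] at hstep
    have hlt : k < nj * (FreeGroup.invRev z.toWord).length := by rw [hZ'len]; omega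
    rw [rep_get _ (by rw [hZ'len]; exact hm) nj k hlt] at hstep
    rw [gcongr (show k % (FreeGroup.invRev z.toWord).length = k by
      rw [hZ'len]; exact Nat.mod_eq_of_lt hk) _] at hstep
    rw [invRev_get z.toWord k hk] at hstep
    exact hstep
  · -- j > 0
    have hzj : z ^ j = z ^ (nj : ℕ) := by
      rw [← zpow_natCast]
      congr 1
      omega
    have hjw : (z ^ j).toWord = rep nj z.toWord := by rw [hzj, hpow]
    have hOCC' : ∀ k, (hk : k < z.toWord.length) →
        z.toWord[(g.toWord.length + k) % z.toWord.length]'(Nat.mod_lt _ hm)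
          = z.toWord[k]'hk := by
      intro k hk
      have hstep := hOCC k hk
      simp only [hjw] at hstep
      rw [rep_get _ hm nj k (by omega)] at hstep
      rw [gcongr (Nat.mod_eq_of_lt hk) _] at hstep
      exact hstep
    by_cases ht0 : g.toWord.length = 0
    · -- g is trivial; conclude
      have hg1 : g = 1 := FreeGroup.toWord_eq_nil_iff.mp (List.eq_nil_of_length_eq_zero ht0)
      by_cases hninj : ni = nj
      · have hnn : ni * z.toWord.length = nj * z.toWord.length := by rw [hninj]
        have hH0 : h.toWord.length = 0 := by omega
        have hh1 : h = 1 := FreeGroup.toWord_eq_nil_iff.mp (List.eq_nil_of_length_eq_zero hH0)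
        refine ⟨hg1, hh1, ?_⟩
        omega
      · exfalso
        have hlt : nj < ni := by
          by_contra hcon
          push_neg at hcon
          have h2 : (ni + 1) * z.toWord.length ≤ nj * z.toWord.length :=
            Nat.mul_le_mul_right _ (by omega)
          have h3 : (ni + 1) * z.toWord.length = ni * z.toWord.length + z.toWord.length := by
            ring
          omega
        have hij : i - j = ((ni - nj : ℕ) : ℤ) := by omega
        have hh : h = y⁻¹ * z ^ (i - j) * y := by
          have hstep : y⁻¹ * z ^ i * y = y⁻¹ * z ^ j * y * h := by
            rw [heq, hg1, one_mul]
          have h4 : h = (y⁻¹ * z ^ j * y)⁻¹ * (y⁻¹ * z ^ i * y) := by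
            rw [hstep]
            group
          rw [h4]
          group
        have hhw : h.toWord = y⁻¹.toWord ++ rep (ni - nj) z.toWord ++ y.toWord := by
          rw [hh, hij, zpow_natCast, hconj _ (by omega)]
        have hhl := congrArg List.length hhw
        simp only [List.length_append, rep_length, hq'] at hhl
        have hsub : (ni - nj) * z.toWord.length + nj * z.toWord.length
            = ni * z.toWord.length := by
          rw [← Nat.add_mul, Nat.sub_add_cancel hlt.le]
        omega
    · -- g nontrivial : impossible
      exfalso
      by_cases hdvd : z.toWord.length ∣ g.toWord.length
      · -- occurrence at a multiple of |z| : contradicts reducedness of z·y junction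
        obtain ⟨c, hc⟩ := hdvd
        have hc1 : 1 ≤ c := by
          rcases Nat.eq_zero_or_pos c with rfl | hcp
          · omega
          · omega
        have htm : z.toWord.length ≤ g.toWord.length := by
          calc z.toWord.length = z.toWord.length * 1 := by ring
          _ ≤ z.toWord.length * c := Nat.mul_le_mul_left _ hc1
          _ = g.toWord.length := hc.symm
        have htni : g.toWord.length ≤ ni * z.toWord.length := by omega
        have h1 : g.toWord.length + y.toWord.length - 1
            < (y⁻¹.toWord ++ rep ni z.toWord ++ y.toWord).length := by
          simp only [List.length_append, rep_length, hq']
          omega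
        have step := List.getElem_of_eq hE h1
        have e1' : g.toWord.length + y.toWord.length - 1
            < (y⁻¹.toWord ++ rep ni z.toWord).length := by
          simp only [List.length_append, rep_length, hq']
          omega
        have e2' : y⁻¹.toWord.length ≤ g.toWord.length + y.toWord.length - 1 := by omega
        rw [List.getElem_append_left e1', List.getElem_append_right e2'] at step
        rw [gcongr (show g.toWord.length + y.toWord.length - 1 - y⁻¹.toWord.length
          = g.toWord.length - 1 by omega) _] at step
        rw [rep_get _ hm ni _ (by omega)] at step
        have hmod : (g.toWord.length - 1) % z.toWord.length = z.toWord.length - 1 := by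
          have h4 : z.toWord.length * c = z.toWord.length * (c - 1) + z.toWord.length := by
            conv_lhs => rw [show c = c - 1 + 1 by omega]
            rw [Nat.mul_succ]
          have h5 : g.toWord.length - 1
              = (z.toWord.length - 1) + z.toWord.length * (c - 1) := by omega
          rw [h5, Nat.add_mul_mod_self_left, Nat.mod_eq_of_lt (by omega)]
        rw [gcongr hmod _] at step
        -- right-hand side : inside the y⁻¹ block
        have f1 : g.toWord.length + y.toWord.length - 1
            < (g.toWord ++ y⁻¹.toWord ++ (z ^ j).toWord ++ y.toWord).length := by
          simp only [List.length_append, hjlen, hq']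
          omega
        have f2 : g.toWord.length + y.toWord.length - 1
            < (g.toWord ++ y⁻¹.toWord ++ (z ^ j).toWord).length := by
          simp only [List.length_append, hjlen, hq']
          omega
        have f3 : g.toWord.length + y.toWord.length - 1 < (g.toWord ++ y⁻¹.toWord).length := by
          simp only [List.length_append, hq']
          omega
        have f4 : g.toWord.length ≤ g.toWord.length + y.toWord.length - 1 := by omega
        rw [List.getElem_append_left f1, List.getElem_append_left f2,
          List.getElem_append_left f3, List.getElem_append_right f4] at step
        rw [gcongr (show g.toWord.length + y.toWord.length - 1 - g.toWord.length
          = y.toWord.length - 1 by omega) _] at step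
        have hY'get : y⁻¹.toWord[y.toWord.length - 1]'(by omega)
            = ivl (y.toWord[0]'(by omega)) := by
          have h0 : y⁻¹.toWord[y.toWord.length - 1]'(by omega)
              = (FreeGroup.invRev y.toWord)[y.toWord.length - 1]'(by
                  rw [FreeGroup.invRev_length]; omega) :=
            List.getElem_of_eq hY' _
          have h1 := invRev_get y.toWord (y.toWord.length - 1) (by omega)
          rw [gcongr (show y.toWord.length - 1 - (y.toWord.length - 1) = 0 by omega) _] at h1
          exact h0.trans h1
        rw [hY'get] at step
        -- the junction of z and y in the reduced word y⁻¹zy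
        have hjunc := red_get hW1red (y⁻¹.toWord.length + z.toWord.length - 1)
          (by simp only [List.length_append]; omega)
        have j1 : (y⁻¹.toWord ++ z.toWord ++ y.toWord)[y⁻¹.toWord.length
            + z.toWord.length - 1]'(by simp only [List.length_append]; omega)
            = z.toWord[z.toWord.length - 1]'(by omega) := by
          rw [List.getElem_append_left (by simp only [List.length_append]; omega),
            List.getElem_append_right (by omega)]
          exact gcongr (by omega) _
        have j2 : (y⁻¹.toWord ++ z.toWord ++ y.toWord)[(y⁻¹.toWord.length
            + z.toWord.length - 1) + 1]'(by simp only [List.length_append]; omega)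
            = y.toWord[0]'(by omega) := by
          rw [List.getElem_append_right (by simp only [List.length_append]; omega)]
          exact gcongr (by simp only [List.length_append]; omega) _
        rw [j1, j2, rp_iff] at hjunc
        exact hjunc step
      · -- occurrence at a non-multiple : z would be a proper power
        have hs1 : 0 < g.toWord.length % z.toWord.length :=
          Nat.pos_of_ne_zero (fun he => hdvd (Nat.dvd_of_mod_eq_zero he))
        have hs2 : g.toWord.length % z.toWord.length < z.toWord.length := Nat.mod_lt _ hm
        obtain ⟨P, c, hc2, hPZ⟩ := rot_proper_power hm _ hs1 hs2 (by
          intro k hk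
          have hstep := hOCC' k hk
          rw [gcongr (show (g.toWord.length + k) % z.toWord.length
            = (k + g.toWord.length % z.toWord.length) % z.toWord.length by
              rw [Nat.add_mod_mod, Nat.add_comm]) _] at hstep
          exact hstep)
        apply hnp
        refine ⟨FreeGroup.mk P, c, hc2, ?_⟩
        rw [FreeGroup.pow_mk, hzmk]
        exact congrArg FreeGroup.mk hPZ



end Stmt9


/-- Let `z` be a nontrivial, cyclically reduced element of a free group which is
not a proper power, and let `y ≠ 1` be such that `y⁻¹ * z * y` is freely reduced.  If `i, j` are
nonzero integers and `y⁻¹ * z ^ i * y = g * (y⁻¹ * z ^ j * y) * h` with the expression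
`g · y⁻¹ · z ^ j · y · h` freely reduced, then `g = h = 1` and `i = j`. -/
theorem stmt_9 {α : Type*} [DecidableEq α] (z y : FreeGroup α)
    (hz : z ≠ 1) (hcyc : CyclicallyReduced z) (hnp : ¬ IsProperPower z)
    (hy : y ≠ 1)
    (hyzy : (y⁻¹ * z * y).toWord.length =
      y⁻¹.toWord.length + z.toWord.length + y.toWord.length)
    (i j : ℤ) (hi : i ≠ 0) (hj : j ≠ 0) (g h : FreeGroup α)
    (heq : y⁻¹ * z ^ i * y = g * (y⁻¹ * z ^ j * y) * h)
    (hred : (g * (y⁻¹ * (z ^ j) * y) * h).toWord.length =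
      g.toWord.length + y⁻¹.toWord.length + (z ^ j).toWord.length
        + y.toWord.length + h.toWord.length) :
    g = 1 ∧ h = 1 ∧ i = j := by
  unfold CyclicallyReduced at hcyc
  unfold IsProperPower at hnp
  rcases lt_or_gt_of_ne hi with hineg | hipos
  · -- i < 0 : pass to inverses
    have hlen_inv : ∀ w : FreeGroup α, w⁻¹.toWord.length = w.toWord.length := by
      intro w
      rw [FreeGroup.toWord_inv, FreeGroup.invRev_length]
    have heq' : y⁻¹ * z ^ (-i) * y = h⁻¹ * (y⁻¹ * z ^ (-j) * y) * g⁻¹ := by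
      have h0 : (y⁻¹ * z ^ i * y)⁻¹ = (g * (y⁻¹ * z ^ j * y) * h)⁻¹ := by rw [heq]
      calc y⁻¹ * z ^ (-i) * y = (y⁻¹ * z ^ i * y)⁻¹ := by group
      _ = (g * (y⁻¹ * z ^ j * y) * h)⁻¹ := h0
      _ = h⁻¹ * (y⁻¹ * z ^ (-j) * y) * g⁻¹ := by group
    have hred' : (h⁻¹ * (y⁻¹ * (z ^ (-j)) * y) * g⁻¹).toWord.length =
        h⁻¹.toWord.length + y⁻¹.toWord.length + (z ^ (-j)).toWord.length
          + y.toWord.length + g⁻¹.toWord.length := by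
      have hprod : h⁻¹ * (y⁻¹ * (z ^ (-j)) * y) * g⁻¹
          = (g * (y⁻¹ * (z ^ j) * y) * h)⁻¹ := by group
      rw [hprod]
      simp only [zpow_neg, hlen_inv]
      have hq2 := hlen_inv y
      omega
    obtain ⟨hh1, hg1, hij⟩ := Stmt9.main_pos z y hz hcyc hnp hy hyzy (-i) (-j)
      (by omega) (by omega) h⁻¹ g⁻¹ heq' hred'
    exact ⟨inv_eq_one.mp hg1, inv_eq_one.mp hh1, by omega⟩
  · exact Stmt9.main_pos z y hz hcyc hnp hy hyzy i j hipos hj g h heq hred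
end

section
/- Let r ∈ F(a, c) and let m, n be nonzero integers with m ≠ n. If the relation a⁻¹·c^m·a = c^n holds in F(a, c)/⟪r⟫ (equivalently, a⁻¹·c^m·a·c^{-n} lies in the normal closure of r in F(a, c)), then the exponent sum of a in r is zero, i.e. r lies in the kernel of the homomorphism F(a, c) → ℤ sending a to 1 and c to 0. -/
/-- Let `r ∈ F(a, c)` (here `a` and `c` are the generators of the free group
on `Fin 2` indexed by `0` and `1` respectively) and let `m ≠ n` be nonzero integers.  If the
relation `a⁻¹ c^m a = c^n` holds in `F(a, c)/⟪r⟫`, then the exponent sum of `a` in `r` is zero,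
i.e. `r` lies in the kernel of the homomorphism `F(a, c) → ℤ` sending `a ↦ 1` and `c ↦ 0`. -/
theorem stmt_13 (r : FreeGroup (Fin 2)) (m n : ℤ) (hm : m ≠ 0) (hn : n ≠ 0) (hmn : m ≠ n)
    (h : (FreeGroup.of 0)⁻¹ * (FreeGroup.of 1 : FreeGroup (Fin 2)) ^ m * FreeGroup.of 0 *
        ((FreeGroup.of 1) ^ n)⁻¹ ∈ Subgroup.normalClosure {r}) :
    FreeGroup.lift
      (fun i : Fin 2 => if i = 0 then Multiplicative.ofAdd (1 : ℤ) else 1) r = 1 := by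
  set φ : FreeGroup (Fin 2) →* Multiplicative ℤ × Multiplicative ℤ :=
    FreeGroup.lift (fun i : Fin 2 =>
      if i = 0 then (Multiplicative.ofAdd (1 : ℤ), 1) else (1, Multiplicative.ofAdd (1 : ℤ)))
    with hφ
  -- the normal closure of {r} lands in zpowers (φ r)
  have hN : Subgroup.normalClosure {r} ≤ (Subgroup.zpowers (φ r)).comap φ := by
    apply Subgroup.normalClosure_le_normal
    · intro x hx
      simp only [Set.mem_singleton_iff] at hx
      subst hx
      exact Subgroup.mem_zpowers _
  have hmem := hN h
  simp only [Subgroup.mem_comap, Subgroup.mem_zpowers_iff] at hmem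
  obtain ⟨k, hk⟩ := hmem
  have hφ0 : φ (FreeGroup.of 0) = (Multiplicative.ofAdd (1 : ℤ), 1) := by simp [hφ]
  have hφ1 : φ (FreeGroup.of 1) = (1, Multiplicative.ofAdd (1 : ℤ)) := by simp [hφ]
  simp only [map_mul, map_inv, map_zpow, hφ0, hφ1] at hk
  have hk1 : (φ r).1 ^ k = 1 := by
    have := congrArg Prod.fst hk
    simpa using this
  have hk2 : (φ r).2 ^ k = Multiplicative.ofAdd (m - n) := by
    have := congrArg Prod.snd hk
    simpa [← ofAdd_zsmul, ← ofAdd_add, ← ofAdd_neg, sub_eq_add_neg] using this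
  -- k ≠ 0
  have hk0 : k ≠ 0 := by
    intro hk0
    rw [hk0, zpow_zero] at hk2
    have : m - n = 0 := by
      have := congrArg Multiplicative.toAdd hk2
      simpa using this.symm
    exact hmn (by linarith)
  -- first component is 1
  have h1 : (φ r).1 = 1 := by
    have := congrArg Multiplicative.toAdd hk1
    simp only [toAdd_zpow, toAdd_one, smul_eq_mul] at this
    have : Multiplicative.toAdd (φ r).1 = 0 := by
      rcases mul_eq_zero.mp this with h | h
      · exact absurd h hk0
      · exact h
    have := congrArg Multiplicative.ofAdd this
    simpa using this
  -- identify the goal map with the first component of φ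
  have hcomp : (MonoidHom.fst (Multiplicative ℤ) (Multiplicative ℤ)).comp φ =
      FreeGroup.lift (fun i : Fin 2 => if i = 0 then Multiplicative.ofAdd (1 : ℤ) else 1) := by
    apply FreeGroup.ext_hom
    intro i
    fin_cases i <;> simp [hφ]
  have := congrFun (congrArg DFunLike.coe hcomp) r
  simp only [MonoidHom.comp_apply, MonoidHom.coe_fst] at this
  rw [← this, h1]
end

section
/- Let p, q ≥ 1 be coprime integers, let G be any group, and let u, v ∈ G satisfy pr_{p/q}(u, v) = 1. Then the subgroup of G generated by u and v is cyclic (in particular u and v commute) and u^q·v^p = 1 in G. -/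
/-- The Christoffel word `pr_{p/q}(u, v)`: the product `s₁ ⋯ s_{p+q}` where
`s_i = u` if `⌊i·p/(p+q)⌋ = ⌊(i−1)·p/(p+q)⌋` and `s_i = v` otherwise. -/
def christoffel {G : Type*} [Group G] (p q : ℕ) (u v : G) : G :=
  ((List.range (p + q)).map
    (fun i => if (i + 1) * p / (p + q) = i * p / (p + q) then u else v)).prod

section aux

variable {G : Type*} [Group G]

/-- Substitution lemma for `p ≤ q` (written `q = p + e`): `u ↦ u`, `v ↦ u*v`. -/
lemma christoffel_lemA (p e : ℕ) (hp : 1 ≤ p) (u v : G) :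
    christoffel p (p + e) u v = christoffel p e u (u * v) := by
  have hq : 0 < p + e := by omega
  have hn : 0 < p + (p + e) := by omega
  set q := p + e with hqdef
  set n := p + (p + e) with hndef
  have hnq : n = p + q := rfl
  have key : ∀ j, j ≤ q →
      ((List.range (j + j * p / q)).map
        (fun i => if (i + 1) * p / n = i * p / n then u else v)).prod
      = ((List.range j).map
        (fun i => if (i + 1) * p / q = i * p / q then u else (u * v))).prod := by
    intro j
    induction j with
    | zero => simp
    | succ j ih =>
      intro hj
      have ihj := ih (by omega)
      set m := j * p / q with hm
      set r := j * p % q with hr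
      have hmr : q * m + r = j * p := Nat.div_add_mod _ _
      have hrq : r < q := Nat.mod_lt _ hq
      -- key product identities
      have hjm : (j + m) * p = n * m + r := by
        have : (j + m) * p = j * p + m * p := by ring
        rw [this, ← hmr]; rw [hnq]; ring
      have hjm1 : (j + m + 1) * p = n * m + (r + p) := by
        have : (j + m + 1) * p = (j + m) * p + p := by ring
        rw [this, hjm]; ring
      have hjm2 : (j + m + 2) * p = n * m + (r + 2 * p) := by
        have : (j + m + 2) * p = (j + m) * p + 2 * p := by ring
        rw [this, hjm]; ring
      have hj1 : (j + 1) * p = q * m + (r + p) := by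
        have : (j + 1) * p = j * p + p := by ring
        rw [this, ← hmr]; ring
      -- floors
      have hfjm : (j + m) * p / n = m := by
        rw [hjm, Nat.mul_add_div hn, Nat.div_eq_of_lt (by omega)]; omega
      have hfjm1 : (j + m + 1) * p / n = m := by
        rw [hjm1, Nat.mul_add_div hn, Nat.div_eq_of_lt (by omega)]; omega
      have hjq : j * p / q = m := rfl
      by_cases hc : r + p < q
      · -- right letter is u, block is a single u
        have hj1q : (j + 1) * p / q = m := by
          rw [hj1, Nat.mul_add_div hq, Nat.div_eq_of_lt hc]; omega
        have hstep : (j + 1) + (j + 1) * p / q = (j + m) + 1 := by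
          rw [hj1q]; omega
        rw [hstep, List.prod_range_succ, List.prod_range_succ, ihj]
        rw [if_pos (by rw [hfjm1, hfjm]), if_pos (by rw [hj1q, hjq])]
      · -- right letter is u*v, block is u·v
        have hrp2 : r + p < 2 * q := by omega
        have hj1q : (j + 1) * p / q = m + 1 := by
          rw [hj1, Nat.mul_add_div hq]
          congr 1
          rw [Nat.div_eq_sub_div hq (by omega), Nat.div_eq_of_lt (by omega)]
        have hfjm2 : (j + m + 2) * p / n = m + 1 := by
          rw [hjm2, Nat.mul_add_div hn]
          congr 1
          rw [Nat.div_eq_sub_div hn (by omega), Nat.div_eq_of_lt (by omega)]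
        have hstep : (j + 1) + (j + 1) * p / q = (j + m) + 1 + 1 := by
          rw [hj1q]; omega
        rw [hstep, List.prod_range_succ, List.prod_range_succ, List.prod_range_succ, ihj]
        rw [if_pos (by rw [hfjm1, hfjm]),
          if_neg (by rw [hfjm2, hfjm1]; omega),
          if_neg (by rw [hj1q, hjq]; omega), mul_assoc]
  have hfin := key q le_rfl
  have h1 : q + q * p / q = n := by
    rw [Nat.mul_div_cancel_left p hq]; omega
  rw [h1] at hfin
  exact hfin

/-- Substitution lemma for `q ≤ p` (written `p = d + q`): `u ↦ u*v`, `v ↦ v`. -/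
lemma christoffel_lemB (d q : ℕ) (hq : 1 ≤ q) (u v : G) :
    christoffel (d + q) q u v = christoffel d q (u * v) v := by
  have hp : 0 < d + q := by omega
  have hn : 0 < (d + q) + q := by omega
  have key : ∀ j, j ≤ d + q →
      ((List.range (2 * j - j * d / (d + q))).map
        (fun i => if (i + 1) * (d + q) / ((d + q) + q) = i * (d + q) / ((d + q) + q)
          then u else v)).prod
      = ((List.range j).map
        (fun i => if (i + 1) * d / (d + q) = i * d / (d + q) then (u * v) else v)).prod := by
    intro j
    induction j with
    | zero => simp
    | succ j ih =>
      intro hj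
      have ihj := ih (by omega)
      set m := j * d / (d + q) with hm
      set r := j * d % (d + q) with hr
      have hmr : (d + q) * m + r = j * d := Nat.div_add_mod _ _
      have hrp : r < d + q := Nat.mod_lt _ hp
      have hmj : m ≤ j := by
        have h1 : (d + q) * m ≤ (d + q) * j := by
          calc (d + q) * m ≤ j * d := by omega
            _ ≤ j * (d + q) := Nat.mul_le_mul_left _ (by omega)
            _ = (d + q) * j := Nat.mul_comm _ _
        exact Nat.le_of_mul_le_mul_left h1 hp
      set k := 2 * j - m with hkdef
      have hk : k + m = 2 * j := by omega
      have hk0 : k * (d + q) = ((d + q) + q) * j + r := by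
        have hk' : (k : ℤ) + m = 2 * j := by exact_mod_cast hk
        have hmr' : ((d : ℤ) + q) * m + r = j * d := by exact_mod_cast hmr
        have : (k : ℤ) * (d + q) = ((d + q) + q) * j + r := by
          linear_combination ((d : ℤ) + q) * hk' - hmr'
        exact_mod_cast this
      have hk1 : (k + 1) * (d + q) = ((d + q) + q) * j + (r + (d + q)) := by
        have : (k + 1) * (d + q) = k * (d + q) + (d + q) := by ring
        rw [this, hk0]; ring
      have hk2 : (k + 2) * (d + q) = ((d + q) + q) * j + (r + 2 * (d + q)) := by
        have : (k + 2) * (d + q) = k * (d + q) + 2 * (d + q) := by ring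
        rw [this, hk0]; ring
      have hj1 : (j + 1) * d = (d + q) * m + (r + d) := by
        have : (j + 1) * d = j * d + d := by ring
        rw [this, ← hmr]; ring
      have hfk : k * (d + q) / ((d + q) + q) = j := by
        rw [hk0, Nat.mul_add_div hn, Nat.div_eq_of_lt (by omega)]; omega
      have hjq : j * d / (d + q) = m := rfl
      by_cases hc : r < q
      · -- right letter is u*v, block is u·v
        have hj1q : (j + 1) * d / (d + q) = m := by
          rw [hj1, Nat.mul_add_div hp, Nat.div_eq_of_lt (by omega)]; omega
        have hfk1 : (k + 1) * (d + q) / ((d + q) + q) = j := by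
          rw [hk1, Nat.mul_add_div hn, Nat.div_eq_of_lt (by omega)]; omega
        have hfk2 : (k + 2) * (d + q) / ((d + q) + q) = j + 1 := by
          rw [hk2, Nat.mul_add_div hn]
          congr 1
          rw [Nat.div_eq_sub_div hn (by omega), Nat.div_eq_of_lt (by omega)]
        have hstep : 2 * (j + 1) - (j + 1) * d / (d + q) = k + 1 + 1 := by
          rw [hj1q]; omega
        rw [hstep, List.prod_range_succ, List.prod_range_succ, List.prod_range_succ, ihj]
        rw [if_pos (by rw [hfk1, hfk]),
          if_neg (by rw [hfk2, hfk1]; omega),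
          if_pos (by rw [hj1q, hjq]), mul_assoc]
      · -- right letter is v, block is a single v
        have hj1q : (j + 1) * d / (d + q) = m + 1 := by
          rw [hj1, Nat.mul_add_div hp]
          congr 1
          rw [Nat.div_eq_sub_div hp (by omega), Nat.div_eq_of_lt (by omega)]
        have hfk1 : (k + 1) * (d + q) / ((d + q) + q) = j + 1 := by
          rw [hk1, Nat.mul_add_div hn]
          congr 1
          rw [Nat.div_eq_sub_div hn (by omega), Nat.div_eq_of_lt (by omega)]
        have hstep : 2 * (j + 1) - (j + 1) * d / (d + q) = k + 1 := by
          rw [hj1q]; omega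
        rw [hstep, List.prod_range_succ, List.prod_range_succ, ihj]
        rw [if_neg (by rw [hfk1, hfk]; omega),
          if_neg (by rw [hj1q, hjq]; omega)]
  have hfin := key (d + q) le_rfl
  have h1 : 2 * (d + q) - (d + q) * d / (d + q) = (d + q) + q := by
    rw [Nat.mul_div_cancel_left d hp]; omega
  rw [h1] at hfin
  exact hfin

end aux

lemma christoffel_core : ∀ n p q, p + q = n → 1 ≤ p → 1 ≤ q → Nat.Coprime p q →
    ∀ {G : Type*} [Group G] (u v : G), christoffel p q u v = 1 →
    u * v = v * u ∧ u ^ q * v ^ p = 1 := by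
  intro n
  induction n using Nat.strong_induction_on with
  | _ n IH =>
    intro p q hn hp hq hpq G _ u v h
    rcases lt_trichotomy p q with hlt | heq | hgt
    · -- p < q
      obtain ⟨e, rfl⟩ : ∃ e, q = p + e := ⟨q - p, by omega⟩
      have he : 1 ≤ e := by omega
      have h' : christoffel p e u (u * v) = 1 := by
        rw [← christoffel_lemA p e hp u v]; exact h
      have hcop : Nat.Coprime p e := by
        have h2 := hpq
        rwa [Nat.add_comm p e, Nat.coprime_add_self_right] at h2
      obtain ⟨hc, hpow⟩ := IH (p + e) (by omega) p e rfl hp he hcop u (u * v) h'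
      have huv : u * v = v * u := by
        have h3 : u * (u * v) = u * (v * u) := by rw [hc, mul_assoc]
        exact mul_left_cancel h3
      refine ⟨huv, ?_⟩
      have hcomm : Commute u v := huv
      rw [hcomm.mul_pow p] at hpow
      have h4 : u ^ (p + e) = u ^ e * u ^ p := by rw [add_comm, pow_add]
      rw [h4, mul_assoc]
      exact hpow
    · -- p = q forces p = q = 1
      subst heq
      have hp1 : p = 1 := by
        have := Nat.Coprime.gcd_eq_one hpq
        simpa using this
      subst hp1
      have h11 : christoffel 1 1 u v = u * v := by
        norm_num [christoffel, List.range_succ]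
      rw [h11] at h
      have hv : v = u⁻¹ := (inv_eq_of_mul_eq_one_right h).symm
      subst hv
      constructor
      · group
      · simp
    · -- q < p
      obtain ⟨d, rfl⟩ : ∃ d, p = d + q := ⟨p - q, by omega⟩
      have hd : 1 ≤ d := by omega
      have h' : christoffel d q (u * v) v = 1 := by
        rw [← christoffel_lemB d q hq u v]; exact h
      have hcop : Nat.Coprime d q := by
        have h2 := hpq
        rwa [Nat.coprime_add_self_left] at h2
      obtain ⟨hc, hpow⟩ := IH (d + q) (by omega) d q rfl hd hq hcop (u * v) v h'
      have huv : u * v = v * u := by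
        have h3 : (u * v) * v = (v * u) * v := hc.trans (mul_assoc v u v).symm
        exact mul_right_cancel h3
      refine ⟨huv, ?_⟩
      have hcomm : Commute u v := huv
      rw [hcomm.mul_pow q] at hpow
      have h4 : v ^ (d + q) = v ^ q * v ^ d := by rw [add_comm, pow_add]
      rw [h4, ← mul_assoc]
      exact hpow

/-- If `p, q ≥ 1` are coprime and `pr_{p/q}(u, v) = 1` holds in a group `G`,
then the subgroup generated by `u` and `v` is cyclic (in particular `u` and `v` commute) and
`u ^ q * v ^ p = 1`. -/
theorem stmt_14 (p q : ℕ) (hp : 1 ≤ p) (hq : 1 ≤ q) (hpq : Nat.Coprime p q)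
    {G : Type*} [Group G] (u v : G) (h : christoffel p q u v = 1) :
    IsCyclic ↥(Subgroup.closure ({u, v} : Set G)) ∧ u * v = v * u ∧ u ^ q * v ^ p = 1 := by
  obtain ⟨hcomm, hpow⟩ := christoffel_core (p + q) p q rfl hp hq hpq u v h
  refine ⟨?_, hcomm, hpow⟩
  have hc : Commute u v := hcomm
  set s := Int.gcdA p q with hs
  set t := Int.gcdB p q with ht
  have hbez : (p : ℤ) * s + (q : ℤ) * t = 1 := by
    have h1 := Int.gcd_eq_gcd_ab (p : ℤ) (q : ℤ)
    have h2 : Int.gcd (p : ℤ) (q : ℤ) = 1 := by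
      rwa [Int.gcd_natCast_natCast]
    rw [h2] at h1
    exact h1.symm
  set z := u ^ s * v ^ (-t) with hz
  have hC : Commute (u ^ s) (v ^ (-t)) := hc.zpow_zpow s (-t)
  have hqp : u ^ (q : ℤ) * v ^ (p : ℤ) = 1 := by
    rw [zpow_natCast, zpow_natCast]; exact hpow
  have hvp : v ^ (p : ℤ) = u ^ (-(q : ℤ)) := by
    rw [zpow_neg]
    refine eq_inv_of_mul_eq_one_left ?_
    rw [(hc.symm.zpow_zpow (p : ℤ) (q : ℤ)).eq]
    exact hqp
  have hup : u ^ (-(q : ℤ)) = v ^ (p : ℤ) := hvp.symm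
  have e1 : v ^ ((-t) * (p : ℤ)) = u ^ ((q : ℤ) * t) := by
    rw [mul_comm, zpow_mul, hvp, ← zpow_mul]
    congr 1
    ring
  have e2 : u ^ (s * (-(q : ℤ))) = v ^ ((p : ℤ) * s) := by
    rw [mul_comm, zpow_mul, hup, ← zpow_mul]
  have hu : z ^ (p : ℤ) = u := by
    calc z ^ (p : ℤ) = u ^ (s * (p : ℤ)) * v ^ ((-t) * (p : ℤ)) := by
          rw [hz, hC.mul_zpow, ← zpow_mul, ← zpow_mul]
      _ = u ^ (s * (p : ℤ)) * u ^ ((q : ℤ) * t) := by rw [e1]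
      _ = u ^ (s * (p : ℤ) + (q : ℤ) * t) := (zpow_add u _ _).symm
      _ = u ^ (1 : ℤ) := by congr 1; linear_combination hbez
      _ = u := zpow_one u
  have hv : z ^ (-(q : ℤ)) = v := by
    calc z ^ (-(q : ℤ)) = u ^ (s * (-(q : ℤ))) * v ^ ((-t) * (-(q : ℤ))) := by
          rw [hz, hC.mul_zpow, ← zpow_mul, ← zpow_mul]
      _ = v ^ ((p : ℤ) * s) * v ^ ((-t) * (-(q : ℤ))) := by rw [e2]
      _ = v ^ ((p : ℤ) * s + (-t) * (-(q : ℤ))) := (zpow_add v _ _).symm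
      _ = v ^ (1 : ℤ) := by congr 1; linear_combination hbez
      _ = v := zpow_one v
  have hle : Subgroup.closure ({u, v} : Set G) ≤ Subgroup.zpowers z := by
    rw [Subgroup.closure_le]
    intro x hx
    rcases hx with rfl | hx
    · exact Subgroup.mem_zpowers_iff.mpr ⟨(p : ℤ), hu⟩
    · rcases hx with rfl
      exact Subgroup.mem_zpowers_iff.mpr ⟨-(q : ℤ), hv⟩
  haveI hzc : IsCyclic ↥(Subgroup.zpowers z) := by
    refine ⟨⟨⟨z, Subgroup.mem_zpowers z⟩, ?_⟩⟩
    rintro ⟨x, hx⟩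
    obtain ⟨k, hk⟩ := Subgroup.mem_zpowers_iff.mp hx
    exact Subgroup.mem_zpowers_iff.mpr ⟨k, by ext; simpa using hk⟩
  have hcyc := Subgroup.isCyclic
    ((Subgroup.closure ({u, v} : Set G)).subgroupOf (Subgroup.zpowers z))
  exact isCyclic_of_surjective (Subgroup.subgroupOfEquivOfLe hle)
    (Subgroup.subgroupOfEquivOfLe hle).surjective
end

section
/- Let p, q ≥ 1 be coprime integers and let F(a, b) be the free group on two generators a, b. Then the Christoffel word pr_{p/q}(a, b) is a primitive element of F(a, b): there exists s ∈ F(a, b) such that {pr_{p/q}(a, b), s} generates F(a, b); equivalently, the one-relator group F(a, b)/⟪pr_{p/q}(a, b)⟫ is infinite cyclic. -/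
private lemma nat_lt_div_succ_mul (a b : ℕ) (hb : 0 < b) : a < (a / b + 1) * b := by
  have h1 := Nat.div_add_mod a b
  have h2 := Nat.mod_lt a hb
  nlinarith

-- Lemma A : p < q
private lemma keyA {G : Type*} [Group G] (p q : ℕ) (hp : 0 < p) (h : p < q) (u v : G) :
    ∀ j : ℕ, (List.range (j + j * p / q)).map
        (fun i => if (i + 1) * p / (p + q) = i * p / (p + q) then u else v)
      = ((List.range j).map
        (fun i => if (i + 1) * p / q = i * p / q then [u] else [u, v])).flatten := by
  intro j
  induction j with
  | zero => simp
  | succ j ih =>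
    have hm1 : (j * p / q) * q ≤ j * p := Nat.div_mul_le_self _ _
    have hm2 : j * p < (j * p / q + 1) * q := nat_lt_div_succ_mul _ _ (by omega)
    generalize hM : j * p / q = M at ih hm1 hm2
    have e0 : (j + M) * p / (p + q) = M := Nat.div_eq_of_lt_le (by nlinarith) (by nlinarith)
    have e1 : (j + M + 1) * p / (p + q) = M := Nat.div_eq_of_lt_le (by nlinarith) (by nlinarith)
    by_cases hc : (j + 1) * p / q = j * p / q
    · rw [hM] at hc
      have ho : (j + 1) + (j + 1) * p / q = (j + M) + 1 := by rw [hc]; omega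
      rw [ho, List.range_succ, List.map_append, ih, List.range_succ, List.map_append,
        List.flatten_append]
      simp [e0, e1, hc, hM]
    · rw [hM] at hc
      have mono : M ≤ (j + 1) * p / q := by
        rw [← hM]; exact Nat.div_le_div_right (by nlinarith)
      have hlt : M < (j + 1) * p / q := lt_of_le_of_ne mono (fun e => hc e.symm)
      have hge : (M + 1) * q ≤ (j + 1) * p :=
        le_trans (Nat.mul_le_mul_right _ hlt) (Nat.div_mul_le_self _ _)
      have hc1 : (j + 1) * p / q = M + 1 := Nat.div_eq_of_lt_le hge (by nlinarith)
      have e2 : (j + M + 2) * p / (p + q) = M + 1 :=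
        Nat.div_eq_of_lt_le (by nlinarith) (by nlinarith)
      have ho : (j + 1) + (j + 1) * p / q = ((j + M) + 1) + 1 := by rw [hc1]; omega
      rw [ho, List.range_succ, List.map_append, List.range_succ, List.map_append, ih,
        List.range_succ, List.map_append, List.flatten_append]
      simp [e0, e1, e2, hc1, hc, hM]

-- Lemma B : q < p ; r = p - q
private lemma keyB {G : Type*} [Group G] (p q : ℕ) (hq : 0 < q) (h : q < p) (u v : G) :
    ∀ j : ℕ, (List.range (j + (j - j * (p - q) / p))).map
        (fun i => if (i + 1) * p / (p + q) = i * p / (p + q) then u else v)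
      = ((List.range j).map
        (fun i => if (i + 1) * (p - q) / p = i * (p - q) / p then [u, v] else [v])).flatten := by
  intro j
  induction j with
  | zero => simp
  | succ j ih =>
    obtain ⟨r, hr⟩ : ∃ r, q + r = p := ⟨p - q, by omega⟩
    have hpq : p - q = r := by omega
    rw [hpq] at ih ⊢
    have hm1 : (j * r / p) * p ≤ j * r := Nat.div_mul_le_self _ _
    have hm2 : j * r < (j * r / p + 1) * p := nat_lt_div_succ_mul _ _ (by omega)
    generalize hM : j * r / p = M at ih hm1 hm2
    have hjp : j * q + j * r = j * p := by rw [← hr, Nat.mul_add]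
    have hj1p : (j + 1) * q + (j + 1) * r = (j + 1) * p := by rw [← hr, Nat.mul_add]
    have hmj : M ≤ j := by
      have h1 : M * p ≤ j * p := by nlinarith
      exact Nat.le_of_mul_le_mul_right h1 (by omega)
    obtain ⟨k, hk⟩ : ∃ k, M + k = j := ⟨j - M, by omega⟩
    have hkj : j - M = k := by omega
    rw [hkj] at ih
    have hkp : M * p + k * p = j * p := by rw [← hk, Nat.add_mul]
    -- invariant: ⌊(j+k)p/(p+q)⌋ = j
    have e0 : (j + k) * p / (p + q) = j :=
      Nat.div_eq_of_lt_le (by linarith [hm1, hjp, hkp]) (by linarith [hm2, hjp, hkp])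
    by_cases hc : (j + 1) * r / p = j * r / p
    · rw [hM] at hc
      have hC : (j + 1) * r < (M + 1) * p := by
        have := nat_lt_div_succ_mul ((j + 1) * r) p (by omega)
        rw [hc] at this; exact this
      have e1 : (j + k + 1) * p / (p + q) = j :=
        Nat.div_eq_of_lt_le (by linarith [hm1, hjp, hkp]) (by linarith [hC, hj1p, hjp, hkp, hr])
      have e2 : (j + k + 2) * p / (p + q) = j + 1 :=
        Nat.div_eq_of_lt_le (by linarith [hm1, hjp, hkp, hr, h]) (by linarith [hC, hj1p, hjp, hkp, hr])
      have ho : (j + 1) + ((j + 1) - (j + 1) * r / p) = ((j + k) + 1) + 1 := by rw [hc]; omega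
      rw [ho, List.range_succ, List.map_append, List.range_succ, List.map_append, ih,
        List.range_succ, List.map_append, List.flatten_append]
      simp [e0, e1, e2, hc, hM]
    · rw [hM] at hc
      have mono : M ≤ (j + 1) * r / p := by
        rw [← hM]; exact Nat.div_le_div_right (by nlinarith)
      have hlt : M < (j + 1) * r / p := lt_of_le_of_ne mono (fun e => hc e.symm)
      have hge : (M + 1) * p ≤ (j + 1) * r :=
        le_trans (Nat.mul_le_mul_right _ hlt) (Nat.div_mul_le_self _ _)
      have hc1 : (j + 1) * r / p = M + 1 :=
        Nat.div_eq_of_lt_le hge (by linarith [hm2, hj1p, hjp, hr, h])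
      have s1 : (j + k + 1) * p / (p + q) = j + 1 :=
        Nat.div_eq_of_lt_le (by linarith [hge, hj1p, hjp, hkp, hr]) (by linarith [hm2, hjp, hkp, hr])
      have ho : (j + 1) + ((j + 1) - (j + 1) * r / p) = (j + k) + 1 := by rw [hc1]; omega
      rw [ho, List.range_succ, List.map_append, ih, List.range_succ, List.map_append,
        List.flatten_append]
      simp [e0, s1, hc1, hc, hM]

private lemma christoffel_step_lt {G : Type*} [Group G] (p q : ℕ) (hp : 0 < p) (h : p < q)
    (u v : G) : christoffel p q u v = christoffel p (q - p) u (u * v) := by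
  have hq : p + (q - p) = q := by omega
  have hqq : q + q * p / q = p + q := by
    rw [Nat.mul_div_cancel_left p (show 0 < q by omega)]; omega
  have hk := keyA p q hp h u v q
  rw [hqq] at hk
  unfold christoffel
  rw [hq, hk, List.prod_flatten, List.map_map]
  congr 1
  apply List.map_congr_left
  intro i _
  by_cases hi : (i + 1) * p / q = i * p / q <;> simp [hi]

private lemma christoffel_step_gt {G : Type*} [Group G] (p q : ℕ) (hq : 0 < q) (h : q < p)
    (u v : G) : christoffel p q u v = christoffel (p - q) q (u * v) v := by
  have hp : (p - q) + q = p := by omega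
  have hpp : p + (p - p * (p - q) / p) = p + q := by
    rw [Nat.mul_div_cancel_left (p - q) (show 0 < p by omega)]; omega
  have hk := keyB p q hq h u v p
  rw [hpp] at hk
  unfold christoffel
  rw [hp, hk, List.prod_flatten, List.map_map]
  congr 1
  apply List.map_congr_left
  intro i _
  by_cases hi : (i + 1) * (p - q) / p = i * (p - q) / p <;> simp [hi]

private lemma christoffel_one_one {G : Type*} [Group G] (u v : G) :
    christoffel 1 1 u v = u * v := by
  simp [christoffel, List.range_succ]

private lemma christoffel_map {G H : Type*} [Group G] [Group H] (f : G →* H) (p q : ℕ)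
    (u v : G) : f (christoffel p q u v) = christoffel p q (f u) (f v) := by
  unfold christoffel
  rw [map_list_prod, List.map_map]
  congr 1
  apply List.map_congr_left
  intro i _
  by_cases hi : (i + 1) * p / (p + q) = i * p / (p + q) <;> simp [hi]

private def phiF : FreeGroup (Fin 2) →* FreeGroup (Fin 2) :=
  FreeGroup.lift (fun i => if i = 0 then FreeGroup.of 0 else FreeGroup.of 0 * FreeGroup.of 1)
private def phiG : FreeGroup (Fin 2) →* FreeGroup (Fin 2) :=
  FreeGroup.lift (fun i => if i = 0 then FreeGroup.of 0 else (FreeGroup.of 0)⁻¹ * FreeGroup.of 1)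

private def phi : FreeGroup (Fin 2) ≃* FreeGroup (Fin 2) :=
  MonoidHom.toMulEquiv phiF phiG
    (by apply FreeGroup.ext_hom; intro i; fin_cases i <;> simp [phiF, phiG])
    (by apply FreeGroup.ext_hom; intro i; fin_cases i <;> simp [phiF, phiG])

private lemma phi_a : phi (FreeGroup.of 0) = FreeGroup.of 0 := by simp [phi, phiF]
private lemma phi_b : phi (FreeGroup.of 1) = FreeGroup.of 0 * FreeGroup.of 1 := by
  simp [phi, phiF]

private def psiF : FreeGroup (Fin 2) →* FreeGroup (Fin 2) :=
  FreeGroup.lift (fun i => if i = 0 then FreeGroup.of 0 * FreeGroup.of 1 else FreeGroup.of 1)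
private def psiG : FreeGroup (Fin 2) →* FreeGroup (Fin 2) :=
  FreeGroup.lift (fun i => if i = 0 then FreeGroup.of 0 * (FreeGroup.of 1)⁻¹ else FreeGroup.of 1)

private def psi : FreeGroup (Fin 2) ≃* FreeGroup (Fin 2) :=
  MonoidHom.toMulEquiv psiF psiG
    (by apply FreeGroup.ext_hom; intro i; fin_cases i <;> simp [psiF, psiG])
    (by apply FreeGroup.ext_hom; intro i; fin_cases i <;> simp [psiF, psiG])

private lemma psi_a : psi (FreeGroup.of 0) = FreeGroup.of 0 * FreeGroup.of 1 := by
  simp [psi, psiF]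
private lemma psi_b : psi (FreeGroup.of 1) = FreeGroup.of 1 := by simp [psi, psiF]

private lemma primitive_christoffel :
    ∀ n p q : ℕ, p + q ≤ n → 0 < p → 0 < q → Nat.Coprime p q →
    ∃ e : FreeGroup (Fin 2) ≃* FreeGroup (Fin 2),
      e (FreeGroup.of 0) = christoffel p q (FreeGroup.of 0) (FreeGroup.of 1) := by
  intro n
  induction n with
  | zero => intro p q hn hp; omega
  | succ n ih =>
    intro p q hn hp hq hco
    rcases lt_trichotomy p q with hlt | heq | hgt
    · obtain ⟨e, he⟩ := ih p (q - p) (by omega) hp (by omega)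
        ((Nat.coprime_sub_self_right hlt.le).mpr hco)
      refine ⟨e.trans phi, ?_⟩
      rw [MulEquiv.trans_apply, he,
        show (phi : FreeGroup (Fin 2) → FreeGroup (Fin 2))
            (christoffel p (q - p) (FreeGroup.of 0) (FreeGroup.of 1)) =
          christoffel p (q - p) (phi (FreeGroup.of 0)) (phi (FreeGroup.of 1)) from
          christoffel_map phi.toMonoidHom p (q - p) _ _,
        phi_a, phi_b, ← christoffel_step_lt p q hp hlt]
    · subst heq
      have h1 : p = 1 := by
        have := hco
        rwa [Nat.Coprime, Nat.gcd_self] at this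
      subst h1
      exact ⟨psi, by rw [psi_a, christoffel_one_one]⟩
    · obtain ⟨e, he⟩ := ih (p - q) q (by omega) (by omega) hq
        ((Nat.coprime_sub_self_left hgt.le).mpr hco)
      refine ⟨e.trans psi, ?_⟩
      rw [MulEquiv.trans_apply, he,
        show (psi : FreeGroup (Fin 2) → FreeGroup (Fin 2))
            (christoffel (p - q) q (FreeGroup.of 0) (FreeGroup.of 1)) =
          christoffel (p - q) q (psi (FreeGroup.of 0)) (psi (FreeGroup.of 1)) from
          christoffel_map psi.toMonoidHom (p - q) q _ _,
        psi_a, psi_b, ← christoffel_step_gt p q hq hgt]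

private lemma range_of_fin2 :
    (Set.range (FreeGroup.of : Fin 2 → FreeGroup (Fin 2)))
      = {FreeGroup.of 0, FreeGroup.of 1} := by
  ext x
  simp [Fin.exists_fin_two, eq_comm]

private lemma closure_pair :
    Subgroup.closure ({FreeGroup.of 0, FreeGroup.of 1} : Set (FreeGroup (Fin 2))) = ⊤ := by
  rw [← range_of_fin2, FreeGroup.closure_range_of]

private lemma quot_cyclic :
    IsCyclic (FreeGroup (Fin 2) ⧸ Subgroup.normalClosure {FreeGroup.of 0}) := by
  set N := Subgroup.normalClosure ({FreeGroup.of 0} : Set (FreeGroup (Fin 2))) with hN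
  have h0 : ((FreeGroup.of 0 : FreeGroup (Fin 2)) : FreeGroup (Fin 2) ⧸ N) = 1 := by
    rw [QuotientGroup.eq_one_iff]
    exact Subgroup.subset_normalClosure rfl
  have htop : Subgroup.closure ({((FreeGroup.of 1 : FreeGroup (Fin 2)) :
      FreeGroup (Fin 2) ⧸ N)} : Set (FreeGroup (Fin 2) ⧸ N)) = ⊤ := by
    have hmap := MonoidHom.map_closure (QuotientGroup.mk' N)
      ({FreeGroup.of 0, FreeGroup.of 1} : Set (FreeGroup (Fin 2)))
    rw [closure_pair, Subgroup.map_top_of_surjective _ (QuotientGroup.mk'_surjective N)] at hmap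
    rw [Set.image_pair] at hmap
    have : ((QuotientGroup.mk' N) (FreeGroup.of 0)) = 1 := h0
    rw [this] at hmap
    have hins : ({(1 : FreeGroup (Fin 2) ⧸ N), (QuotientGroup.mk' N) (FreeGroup.of 1)} :
        Set (FreeGroup (Fin 2) ⧸ N)) = {1} ∪ {(QuotientGroup.mk' N) (FreeGroup.of 1)} :=
      Set.insert_eq _ _
    rw [hins, Subgroup.closure_union, Subgroup.closure_singleton_one, bot_sup_eq] at hmap
    exact hmap.symm
  refine ⟨⟨((FreeGroup.of 1 : FreeGroup (Fin 2)) : FreeGroup (Fin 2) ⧸ N), fun x => ?_⟩⟩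
  have hx : x ∈ (⊤ : Subgroup (FreeGroup (Fin 2) ⧸ N)) := trivial
  rw [← htop, ← Subgroup.zpowers_eq_closure] at hx
  exact hx

private lemma quot_infinite :
    Infinite (FreeGroup (Fin 2) ⧸ Subgroup.normalClosure {FreeGroup.of 0}) := by
  set N := Subgroup.normalClosure ({FreeGroup.of 0} : Set (FreeGroup (Fin 2))) with hN
  set f : FreeGroup (Fin 2) →* Multiplicative ℤ :=
    FreeGroup.lift (fun i => if i = 0 then 1 else Multiplicative.ofAdd 1) with hf
  have hker : N ≤ f.ker := by
    apply Subgroup.normalClosure_le_normal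
    intro x hx
    rw [Set.mem_singleton_iff] at hx
    subst hx
    simp [f, MonoidHom.mem_ker]
  set g := QuotientGroup.lift N f hker with hg
  have hsurj : Function.Surjective g := by
    intro z
    refine ⟨((FreeGroup.of 1 ^ (Multiplicative.toAdd z) : FreeGroup (Fin 2)) :
      FreeGroup (Fin 2) ⧸ N), ?_⟩
    rw [hg]
    rw [QuotientGroup.lift_mk]
    rw [map_zpow]
    have hfb : f (FreeGroup.of 1) = Multiplicative.ofAdd 1 := by simp [f]
    rw [hfb]
    exact Multiplicative.toAdd.injective (by simp)
  exact Infinite.of_surjective g hsurj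

/-- For coprime `p, q ≥ 1`, the Christoffel word `pr_{p/q}(a, b)` is a
primitive element of the free group `F(a, b)`: together with some `s` it generates `F(a, b)`;
equivalently, the one-relator group `F(a, b)/⟪pr_{p/q}(a, b)⟫` is infinite cyclic. -/
theorem stmt_15 (p q : ℕ) (hp : 1 ≤ p) (hq : 1 ≤ q) (hpq : Nat.Coprime p q) :
    (∃ s : FreeGroup (Fin 2),
      Subgroup.closure ({christoffel p q (FreeGroup.of 0) (FreeGroup.of 1), s} :
        Set (FreeGroup (Fin 2))) = ⊤) ∧
    IsCyclic (FreeGroup (Fin 2) ⧸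
      Subgroup.normalClosure {christoffel p q (FreeGroup.of 0) (FreeGroup.of 1)}) ∧
    Infinite (FreeGroup (Fin 2) ⧸
      Subgroup.normalClosure {christoffel p q (FreeGroup.of 0) (FreeGroup.of 1)}) := by
  obtain ⟨e, he⟩ := primitive_christoffel (p + q) p q le_rfl hp hq hpq
  have hiso : Subgroup.map (e : FreeGroup (Fin 2) →* FreeGroup (Fin 2))
      (Subgroup.normalClosure {FreeGroup.of 0})
      = Subgroup.normalClosure {christoffel p q (FreeGroup.of 0) (FreeGroup.of 1)} := by
    rw [Subgroup.map_normalClosure _ _ e.surjective, Set.image_singleton]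
    simp only [MonoidHom.coe_coe]
    rw [he]
  let iso := QuotientGroup.congr (Subgroup.normalClosure {FreeGroup.of 0})
    (Subgroup.normalClosure {christoffel p q (FreeGroup.of 0) (FreeGroup.of 1)}) e hiso
  refine ⟨⟨e (FreeGroup.of 1), ?_⟩, ?_, ?_⟩
  · rw [← he, ← Set.image_pair, ← MonoidHom.coe_coe e, ← MonoidHom.map_closure, closure_pair,
      Subgroup.map_top_of_surjective _ e.surjective]
  · haveI := quot_cyclic
    exact isCyclic_of_surjective iso.toMonoidHom iso.surjective
  · exact @Infinite.of_surjective _ _ quot_infinite (⇑iso.symm) iso.symm.surjective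
end

section
/- Let p, q ≥ 1 be coprime integers and let F(a, t) be the free group on two generators a, t. Then the one-relator group F(a, t)/⟪pr_{p/q}(a, t⁻¹·a⁻¹·t)⟫ is isomorphic to the Baumslag–Solitar group BS(p, q). -/
/-- The Baumslag–Solitar group `BS(p, q) = ⟨s, t | t s^p t⁻¹ = s^q⟩`, with `s` the generator
indexed by `false` and `t` the generator indexed by `true`. -/
abbrev BS (p q : ℕ) : Type :=
  PresentedGroup ({FreeGroup.of true * (FreeGroup.of false) ^ p * (FreeGroup.of true)⁻¹ *
    ((FreeGroup.of false) ^ q)⁻¹} : Set (FreeGroup Bool))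

namespace Stmt16

variable {G : Type*} [Group G] {H : Type*} [Group H]

lemma prodRange_succ (f : ℕ → G) (n : ℕ) :
    ((List.range (n+1)).map f).prod = ((List.range n).map f).prod * f n := by
  simp [List.range_succ]

lemma condIff {N P : ℕ} (hN : 0 < N) (x : ℕ) :
    (x+1)*P/N = x*P/N ↔ x*P % N + P < N := by
  have hsplit : (x+1)*P = N * (x*P/N) + (x*P % N + P) := by
    have h := Nat.div_add_mod (x*P) N
    have : (x+1)*P = x*P + P := by ring
    omega
  have hdiv : (x+1)*P/N = x*P/N + (x*P % N + P)/N := by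
    rw [hsplit, Nat.mul_add_div hN]
  rw [hdiv]
  constructor
  · intro h
    have h0 : (x*P % N + P)/N = 0 := by omega
    have := Nat.mod_lt (x*P) hN
    rcases Nat.lt_or_ge (x*P % N + P) N with h1 | h1
    · exact h1
    · exfalso
      have := Nat.div_pos h1 hN
      omega
  · intro h
    rw [Nat.div_eq_of_lt h, Nat.add_zero]

lemma condMod {N P : ℕ} (x : ℕ) :
    (x+1)*P % N = (x*P % N + P) % N := by
  have hsplit : (x+1)*P = N * (x*P/N) + (x*P % N + P) := by
    have h := Nat.div_add_mod (x*P) N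
    have : (x+1)*P = x*P + P := by ring
    omega
  rw [hsplit, Nat.mul_add_mod]


lemma christoffel_zpow (g : G) (m n : ℤ) (p q : ℕ) :
    christoffel p q (g ^ m) (g ^ n) = g ^ (m * q + n * p) := by
  set N := p + q with hNdef
  have key : ∀ k, k ≤ N →
      ((List.range k).map (fun i => if (i+1)*p/N = i*p/N then g^m else g^n)).prod
        = g ^ (m * k + (n - m) * ((k*p/N : ℕ) : ℤ)) := by
    intro k hk
    induction k with
    | zero => simp
    | succ k ih =>
      have hk' : k ≤ N := Nat.le_of_succ_le hk
      rw [prodRange_succ, ih hk']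
      by_cases hc : (k+1)*p/N = k*p/N
      · rw [if_pos hc, hc, ← zpow_add]
        congr 1
        push_cast
        ring
      · rw [if_neg hc]
        have hN : 0 < N := by
          rcases Nat.eq_zero_or_pos N with h0 | h0
          · exfalso; apply hc; simp [h0]
          · exact h0
        have hpN : p ≤ N := by omega
        have h1 : k*p/N ≤ (k+1)*p/N :=
          Nat.div_le_div_right (Nat.mul_le_mul_right _ (Nat.le_succ k))
        have h2 : (k+1)*p/N ≤ k*p/N + 1 := by
          have hle : (k+1)*p ≤ k*p + N := by
            have : (k+1)*p = k*p + p := by ring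
            omega
          calc (k+1)*p/N ≤ (k*p + N)/N := Nat.div_le_div_right hle
            _ = k*p/N + 1 := Nat.add_div_right _ hN
        have hstep : (k+1)*p/N = k*p/N + 1 := by omega
        rw [hstep, ← zpow_add]
        congr 1
        push_cast
        ring
  have := key N le_rfl
  rcases Nat.eq_zero_or_pos N with h0 | h0
  · have hp0 : p = 0 := by omega
    have hq0 : q = 0 := by omega
    unfold christoffel
    rw [← hNdef, h0]
    simp [hp0, hq0]
  · have hNp : N*p/N = p := by
      rw [Nat.mul_div_cancel_left _ h0]
    rw [hNp] at this
    unfold christoffel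
    rw [← hNdef, this]
    congr 1
    push_cast [hNdef]
    ring

lemma prod_range_inv (f : ℕ → G) (N : ℕ) :
    (((List.range N).map f).prod)⁻¹ = ((List.range N).map (fun i => (f (N - 1 - i))⁻¹)).prod := by
  induction N with
  | zero => simp
  | succ N ih =>
    rw [prodRange_succ, mul_inv_rev, ih, List.range_succ_eq_map, List.map_cons,
      List.prod_cons, List.map_map]
    have h0 : N + 1 - 1 - 0 = N := by omega
    rw [h0]
    congr 1
    refine congrArg List.prod (List.map_congr_left ?_)
    intro i _
    simp only [Function.comp_apply]
    congr 2
    omega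


lemma map_christoffel (φ : G →* H) (p q : ℕ) (u v : G) :
    φ (christoffel p q u v) = christoffel p q (φ u) (φ v) := by
  unfold christoffel
  rw [← List.prod_hom _ φ, List.map_map]
  congr 1
  apply List.map_congr_left
  intro i _
  simp only [Function.comp_apply, apply_ite φ]

/-- floor-jump characterization -/

lemma R1key (p d : ℕ) (hp : 0 < p) (hd : 0 < d) (u v : G) :
    ∀ j, j ≤ p + d →
      ((List.range (j + j*p/(p+d))).map
        (fun i => if (i+1)*p/(p+(p+d)) = i*p/(p+(p+d)) then u else v)).prod
      = ((List.range j).map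
        (fun i => if (i+1)*p/(p+d) = i*p/(p+d) then u else u*v)).prod := by
  set q := p + d with hqdef
  set N := p + (p + d) with hNdef
  have hq0 : 0 < q := by omega
  have hN0 : 0 < N := by omega
  have hplt : p < q := by omega
  intro j hj
  induction j with
  | zero => simp
  | succ j ih =>
    have hj' : j ≤ q := Nat.le_of_succ_le hj
    set m := j*p/q with hm
    set r := j*p % q with hr
    have hjp : q*m + r = j*p := Nat.div_add_mod _ _
    have hrq : r < q := Nat.mod_lt _ hq0
    have hip : (j+m)*p = N*m + r := by
      have e1 : (j+m)*p = j*p + m*p := by ring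
      have e2 : N*m = q*m + p*m := by rw [hNdef, hqdef]; ring
      have e3 : m*p = p*m := Nat.mul_comm _ _
      omega
    have hiDiv : (j+m)*p/N = m := by
      rw [hip, Nat.mul_add_div hN0, Nat.div_eq_of_lt (by omega), Nat.add_zero]
    have hiMod : (j+m)*p % N = r := by
      rw [hip, Nat.mul_add_mod, Nat.mod_eq_of_lt (by omega)]
    have hfAi : ((j+m)+1)*p/N = (j+m)*p/N := by
      rw [condIff hN0]
      omega
    have h1 : (j+1)*p = q*m + (r+p) := by
      have h2 : (j+1)*p = j*p + p := by ring
      omega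
    have hBdiv : (j+1)*p/q = m + (r+p)/q := by
      rw [h1, Nat.mul_add_div hq0]
    by_cases hc : r + p < q
    · have hd0 : (r+p)/q = 0 := Nat.div_eq_of_lt hc
      have hidx : (j+1) + (j+1)*p/q = (j + m) + 1 := by omega
      rw [hidx, prodRange_succ, prodRange_succ, ih hj']
      congr 1
      · rw [if_pos hfAi]
        rw [if_pos (show (j+1)*p/q = j*p/q by omega)]
    · have hd1 : (r+p)/q = 1 := by
        have h2 : r+p = q*1 + (r+p-q) := by omega
        rw [h2, Nat.mul_add_div hq0, Nat.div_eq_of_lt (by omega)]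
      have hfAi1 : ¬ (((j+m+1)+1)*p/N = (j+m+1)*p/N) := by
        rw [condIff hN0]
        have hmod1 : (j+m+1)*p % N = r + p := by
          rw [condMod, hiMod, Nat.mod_eq_of_lt (by omega)]
        omega
      have hidx : (j+1) + (j+1)*p/q = ((j + m) + 1) + 1 := by omega
      rw [hidx, prodRange_succ, prodRange_succ, prodRange_succ, ih hj']
      rw [if_pos hfAi, if_neg hfAi1, if_neg (show ¬((j+1)*p/q = j*p/q) by omega)]
      rw [mul_assoc]

lemma R1 {p d : ℕ} (hp : 0 < p) (hd : 0 < d) (u v : G) :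
    christoffel p (p + d) u v = christoffel p d u (u * v) := by
  have := R1key p d hp hd u v (p+d) le_rfl
  unfold christoffel
  have h1 : (p+d) + (p+d)*p/(p+d) = p + (p+d) := by
    rw [Nat.mul_div_cancel_left _ (by omega : 0 < p + d)]
    omega
  rw [h1] at this
  exact this


/-- the letter symmetry -/
lemma letter_sym {p q : ℕ} (hp : 0 < p) (hq : 0 < q) {i : ℕ} (hi : i < p + q) :
    ((i+1)*q/(p+q) = i*q/(p+q)) ↔ ¬ (((p+q-1-i)+1)*p/(p+q) = (p+q-1-i)*p/(p+q)) := by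
  set N := p + q with hNdef
  have hN0 : 0 < N := by omega
  set k := N - 1 - i with hk
  have hkey : k*p % N = (i+1)*q % N := by
    have h1 : k*p + (i+1)*p = N*p := by
      have h2 : k + (i+1) = N := by omega
      calc k*p + (i+1)*p = (k + (i+1))*p := by ring
        _ = N*p := by rw [h2]
    have h3 : k*p + (i+1)*N = N*p + (i+1)*q := by
      have e : (i+1)*N = (i+1)*p + (i+1)*q := by rw [hNdef]; ring
      omega
    calc k*p % N = (k*p + (i+1)*N) % N := by rw [Nat.add_mul_mod_self_right]
      _ = (N*p + (i+1)*q) % N := by rw [h3]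
      _ = (i+1)*q % N := by rw [Nat.mul_add_mod]
  rw [condIff hN0, condIff hN0, hkey]
  have hs : i*q % N < N := Nat.mod_lt _ hN0
  have hmod : (i+1)*q % N = (i*q % N + q) % N := condMod _
  rcases Nat.lt_or_ge (i*q % N) p with h | h
  · have : (i+1)*q % N = i*q % N + q := by
      rw [hmod, Nat.mod_eq_of_lt (by omega)]
    omega
  · have : (i+1)*q % N = i*q % N + q - N := by
      rw [hmod, Nat.mod_eq_sub_mod (by omega), Nat.mod_eq_of_lt (by omega)]
    omega

lemma rev {p q : ℕ} (hp : 0 < p) (hq : 0 < q) (u v : G) :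
    (christoffel p q u v)⁻¹ = christoffel q p v⁻¹ u⁻¹ := by
  unfold christoffel
  rw [prod_range_inv]
  rw [show q + p = p + q from Nat.add_comm q p]
  refine congrArg List.prod (List.map_congr_left ?_)
  intro i hi
  have hi' : i < p + q := List.mem_range.mp hi
  have h := letter_sym hp hq hi'
  by_cases hc : (i+1)*q/(p+q) = i*q/(p+q)
  · rw [if_pos hc, if_neg (h.mp hc)]
  · rw [if_neg hc]
    have : ((p+q-1-i)+1)*p/(p+q) = (p+q-1-i)*p/(p+q) := by
      by_contra hcon
      exact hc (h.mpr hcon)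
    rw [if_pos this]


lemma R2 {q d : ℕ} (hq : 0 < q) (hd : 0 < d) (u v : G) :
    christoffel (q + d) q u v = christoffel d q (u * v) v := by
  have h1 := rev (p := q + d) (q := q) (by omega) hq u v
  have h2 := R1 (p := q) (d := d) hq hd (v⁻¹) (u⁻¹)
  have h3 := rev (p := d) (q := q) hd hq (u*v) v
  have h4 : (u*v)⁻¹ = v⁻¹ * u⁻¹ := by rw [mul_inv_rev]
  rw [h4] at h3
  calc christoffel (q + d) q u v = ((christoffel (q+d) q u v)⁻¹)⁻¹ := by rw [inv_inv]
    _ = (christoffel q (q+d) v⁻¹ u⁻¹)⁻¹ := by rw [h1]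
    _ = (christoffel q d v⁻¹ (v⁻¹ * u⁻¹))⁻¹ := by rw [h2]
    _ = ((christoffel d q (u*v) v)⁻¹)⁻¹ := by rw [h3]
    _ = christoffel d q (u*v) v := by rw [inv_inv]


def Wpq (p q : ℕ) : FreeGroup Bool :=
  christoffel p q (FreeGroup.of true) (FreeGroup.of false)

def Npq (p q : ℕ) : Subgroup (FreeGroup Bool) := Subgroup.normalClosure {Wpq p q}

instance NpqNormal (p q : ℕ) : (Npq p q).Normal := Subgroup.normalClosure_normal

def mkQ (p q : ℕ) : FreeGroup Bool →* FreeGroup Bool ⧸ Npq p q := QuotientGroup.mk' _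

def Epq (p q : ℕ) : FreeGroup Bool →* Multiplicative ℤ :=
  FreeGroup.lift (fun x => Multiplicative.ofAdd (if x then -(p:ℤ) else (q:ℤ)))

lemma Epq_true (p q : ℕ) : Epq p q (FreeGroup.of true) = Multiplicative.ofAdd (-(p:ℤ)) := by
  unfold Epq; rw [FreeGroup.lift_apply_of]; simp

lemma Epq_false (p q : ℕ) : Epq p q (FreeGroup.of false) = Multiplicative.ofAdd ((q:ℤ)) := by
  unfold Epq; rw [FreeGroup.lift_apply_of]; simp

/-- transport of quotient equalities along a hom mapping relator to relator -/
lemma transportW {p q p' q' : ℕ} (e : FreeGroup Bool →* FreeGroup Bool)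
    (hW : e (Wpq p' q') = Wpq p q) {x y : FreeGroup Bool}
    (hxy : mkQ p' q' x = mkQ p' q' y) : mkQ p q (e x) = mkQ p q (e y) := by
  have hle : Npq p' q' ≤ Subgroup.comap e (Npq p q) := by
    apply Subgroup.normalClosure_le_normal
    intro w hw
    rcases hw with rfl
    show e (Wpq p' q') ∈ Npq p q
    rw [hW]
    exact Subgroup.subset_normalClosure rfl
  have h0 : mkQ p' q' (x⁻¹ * y) = 1 := by
    rw [map_mul, map_inv, hxy, inv_mul_cancel]
  have h1 : x⁻¹ * y ∈ Npq p' q' := by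
    rwa [mkQ, QuotientGroup.mk'_apply, QuotientGroup.eq_one_iff] at h0
  have h2 : e (x⁻¹ * y) ∈ Npq p q := hle h1
  have h3 : mkQ p q (e (x⁻¹ * y)) = 1 := by
    rw [mkQ, QuotientGroup.mk'_apply, QuotientGroup.eq_one_iff]
    exact h2
  rw [map_mul, map_inv] at h3
  exact inv_mul_eq_one.mp h3

lemma star : ∀ n p q, p + q = n → 0 < p → 0 < q → Nat.Coprime p q →
    ∃ z : FreeGroup Bool,
      mkQ p q (FreeGroup.of true) = (mkQ p q z) ^ (-(p:ℤ)) ∧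
      mkQ p q (FreeGroup.of false) = (mkQ p q z) ^ ((q:ℤ)) ∧
      Epq p q z = Multiplicative.ofAdd 1 := by
  intro n
  induction n using Nat.strong_induction_on with
  | _ n ih =>
  intro p q hn hp hq hco
  rcases Nat.lt_trichotomy p q with hlt | heq | hgt
  · -- p < q
    set d := q - p with hddef
    have hd : 0 < d := by omega
    have hpd : p + d = q := by omega
    have hco' : Nat.Coprime p d := by
      rw [hddef]
      exact (Nat.coprime_sub_self_right (le_of_lt hlt)).mpr hco
    obtain ⟨z', h1, h2, h3⟩ := ih (p + d) (by omega) p d rfl hp hd hco'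
    set e1 : FreeGroup Bool →* FreeGroup Bool :=
      FreeGroup.lift (fun x => if x then FreeGroup.of true
        else FreeGroup.of true * FreeGroup.of false) with he1def
    have he1a : e1 (FreeGroup.of true) = FreeGroup.of true := by
      rw [he1def, FreeGroup.lift_apply_of]; simp
    have he1b : e1 (FreeGroup.of false) = FreeGroup.of true * FreeGroup.of false := by
      rw [he1def, FreeGroup.lift_apply_of]; simp
    have hW : e1 (Wpq p d) = Wpq p q := by
      unfold Wpq
      rw [map_christoffel, he1a, he1b, ← hpd]
      exact (R1 hp hd _ _).symm
    refine ⟨e1 z', ?_, ?_, ?_⟩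
    · have := transportW e1 hW (x := FreeGroup.of true) (y := z' ^ (-(p:ℤ)))
        (by rw [map_zpow]; exact h1)
      rwa [he1a, map_zpow, map_zpow] at this
    · have hab := transportW e1 hW (x := FreeGroup.of false) (y := z' ^ ((d:ℤ)))
        (by rw [map_zpow]; exact h2)
      rw [he1b, map_zpow, map_zpow, map_mul] at hab
      have hA : mkQ p q (FreeGroup.of true) = (mkQ p q (e1 z')) ^ (-(p:ℤ)) := by
        have := transportW e1 hW (x := FreeGroup.of true) (y := z' ^ (-(p:ℤ)))
          (by rw [map_zpow]; exact h1)
        rwa [he1a, map_zpow, map_zpow] at this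
      calc mkQ p q (FreeGroup.of false)
          = (mkQ p q (FreeGroup.of true))⁻¹ *
            (mkQ p q (FreeGroup.of true) * mkQ p q (FreeGroup.of false)) :=
            (inv_mul_cancel_left _ _).symm
        _ = ((mkQ p q (e1 z')) ^ (-(p:ℤ)))⁻¹ * (mkQ p q (e1 z')) ^ ((d:ℤ)) := by
            rw [hab, hA]
        _ = (mkQ p q (e1 z')) ^ ((q:ℤ)) := by
            rw [← zpow_neg, ← zpow_add]
            congr 1
            omega
    · have hcomp : (Epq p q).comp e1 = Epq p d := by
        apply FreeGroup.ext_hom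
        intro x
        cases x
        · rw [MonoidHom.comp_apply, he1b, map_mul, Epq_true, Epq_false, Epq_false,
            ← ofAdd_add]
          congr 1
          omega
        · rw [MonoidHom.comp_apply, he1a, Epq_true, Epq_true]
      have : Epq p q (e1 z') = ((Epq p q).comp e1) z' := rfl
      rw [this, hcomp, h3]
  · -- p = q
    have hp1 : p = 1 := by
      have := hco
      rw [Nat.Coprime, heq, Nat.gcd_self] at this
      omega
    subst heq
    subst hp1
    have hW : Wpq 1 1 = FreeGroup.of true * FreeGroup.of false := by
      unfold Wpq christoffel
      norm_num [List.range_succ]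
    have hone : mkQ 1 1 (Wpq 1 1) = 1 := by
      rw [mkQ, QuotientGroup.mk'_apply, QuotientGroup.eq_one_iff]
      exact Subgroup.subset_normalClosure rfl
    rw [hW, map_mul] at hone
    refine ⟨FreeGroup.of false, ?_, ?_, ?_⟩
    · rw [show (-((1:ℕ):ℤ)) = -1 by norm_num, zpow_neg_one]
      exact eq_inv_of_mul_eq_one_left hone
    · rw [show (((1:ℕ):ℤ)) = 1 by norm_num, zpow_one]
    · rw [Epq_false]; norm_num
  · -- q < p
    set d := p - q with hddef
    have hd : 0 < d := by omega
    have hqd : q + d = p := by omega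
    have hco' : Nat.Coprime d q := by
      rw [hddef]
      exact (Nat.coprime_sub_self_left (le_of_lt hgt)).mpr hco
    obtain ⟨z', h1, h2, h3⟩ := ih (d + q) (by omega) d q rfl hd hq hco'
    set e2 : FreeGroup Bool →* FreeGroup Bool :=
      FreeGroup.lift (fun x => if x then FreeGroup.of true * FreeGroup.of false
        else FreeGroup.of false) with he2def
    have he2a : e2 (FreeGroup.of true) = FreeGroup.of true * FreeGroup.of false := by
      rw [he2def, FreeGroup.lift_apply_of]; simp
    have he2b : e2 (FreeGroup.of false) = FreeGroup.of false := by
      rw [he2def, FreeGroup.lift_apply_of]; simp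
    have hW : e2 (Wpq d q) = Wpq p q := by
      unfold Wpq
      rw [map_christoffel, he2a, he2b, ← hqd]
      exact (R2 hq hd _ _).symm
    refine ⟨e2 z', ?_, ?_, ?_⟩
    · have hab := transportW e2 hW (x := FreeGroup.of true) (y := z' ^ (-(d:ℤ)))
        (by rw [map_zpow]; exact h1)
      rw [he2a, map_zpow, map_zpow, map_mul] at hab
      have hB : mkQ p q (FreeGroup.of false) = (mkQ p q (e2 z')) ^ ((q:ℤ)) := by
        have := transportW e2 hW (x := FreeGroup.of false) (y := z' ^ ((q:ℤ)))
          (by rw [map_zpow]; exact h2)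
        rwa [he2b, map_zpow, map_zpow] at this
      calc mkQ p q (FreeGroup.of true)
          = (mkQ p q (FreeGroup.of true) * mkQ p q (FreeGroup.of false)) *
            (mkQ p q (FreeGroup.of false))⁻¹ := (mul_inv_cancel_right _ _).symm
        _ = (mkQ p q (e2 z')) ^ (-(d:ℤ)) * ((mkQ p q (e2 z')) ^ ((q:ℤ)))⁻¹ := by
            rw [hab, hB]
        _ = (mkQ p q (e2 z')) ^ (-(p:ℤ)) := by
            rw [← zpow_neg, ← zpow_add]
            congr 1
            omega
    · have := transportW e2 hW (x := FreeGroup.of false) (y := z' ^ ((q:ℤ)))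
        (by rw [map_zpow]; exact h2)
      rwa [he2b, map_zpow, map_zpow] at this
    · have hcomp : (Epq p q).comp e2 = Epq d q := by
        apply FreeGroup.ext_hom
        intro x
        cases x
        · rw [MonoidHom.comp_apply, he2b, Epq_false, Epq_false]
        · rw [MonoidHom.comp_apply, he2a, map_mul, Epq_true, Epq_false, Epq_true,
            ← ofAdd_add]
          congr 1
          omega
      have : Epq p q (e2 z') = ((Epq p q).comp e2) z' := rfl
      rw [this, hcomp, h3]


lemma transport {p' q' : ℕ} {K : Subgroup (FreeGroup Bool)} [K.Normal]
    (e : FreeGroup Bool →* FreeGroup Bool) (hW : e (Wpq p' q') ∈ K)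
    {x y : FreeGroup Bool} (hxy : mkQ p' q' x = mkQ p' q' y) :
    (QuotientGroup.mk' K) (e x) = (QuotientGroup.mk' K) (e y) := by
  have hle : Npq p' q' ≤ Subgroup.comap e K := by
    apply Subgroup.normalClosure_le_normal
    intro w hw
    rcases hw with rfl
    exact hW
  have h0 : mkQ p' q' (x⁻¹ * y) = 1 := by
    rw [map_mul, map_inv, hxy, inv_mul_cancel]
  have h1 : x⁻¹ * y ∈ Npq p' q' := by
    rwa [mkQ, QuotientGroup.mk'_apply, QuotientGroup.eq_one_iff] at h0
  have h3 : (QuotientGroup.mk' K) (e (x⁻¹ * y)) = 1 := by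
    rw [QuotientGroup.mk'_apply, QuotientGroup.eq_one_iff]
    exact hle h1
  rw [map_mul, map_inv] at h3
  exact inv_mul_eq_one.mp h3

end Stmt16

open Stmt16

/-- For coprime `p, q ≥ 1`, with `a` the generator indexed by `true` and `t`
the generator indexed by `false`, the one-relator group `F(a, t)/⟪pr_{p/q}(a, t⁻¹ a⁻¹ t)⟫` is
isomorphic to the Baumslag–Solitar group `BS(p, q)`. -/
theorem stmt_16 (p q : ℕ) (hp : 1 ≤ p) (hq : 1 ≤ q) (hpq : Nat.Coprime p q) :
    Nonempty ((FreeGroup Bool ⧸ Subgroup.normalClosure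
      {christoffel p q (FreeGroup.of true)
        ((FreeGroup.of false)⁻¹ * (FreeGroup.of true)⁻¹ * FreeGroup.of false)}) ≃* BS p q) := by
  obtain ⟨z, hz1, hz2, hz3⟩ := star (p + q) p q rfl hp hq hpq
  set rel : FreeGroup Bool := christoffel p q (FreeGroup.of true)
      ((FreeGroup.of false)⁻¹ * (FreeGroup.of true)⁻¹ * FreeGroup.of false) with hreldef
  set NG : Subgroup (FreeGroup Bool) := Subgroup.normalClosure {rel} with hNGdef
  set mkG : FreeGroup Bool →* FreeGroup Bool ⧸ NG := QuotientGroup.mk' NG with hmkGdef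
  -- the presented group data
  set σ : BS p q := PresentedGroup.of false with hσdef
  set τ : BS p q := PresentedGroup.of true with hτdef
  set πBS : FreeGroup Bool →* BS p q := QuotientGroup.mk' _ with hπdef
  have hπof : ∀ x : Bool, πBS (FreeGroup.of x) = PresentedGroup.of x := fun _ => rfl
  have hBSone : τ * σ ^ p * τ⁻¹ * (σ ^ q)⁻¹ = 1 := by
    have h0 : πBS (FreeGroup.of true * (FreeGroup.of false) ^ p * (FreeGroup.of true)⁻¹ *
        ((FreeGroup.of false) ^ q)⁻¹) = 1 := by
      exact (QuotientGroup.eq_one_iff _).mpr (Subgroup.subset_normalClosure rfl)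
    rw [map_mul, map_mul, map_mul, map_inv, map_inv, map_pow, map_pow, hπof, hπof] at h0
    exact h0
  have hconjN : τ * σ ^ p * τ⁻¹ = σ ^ q := mul_inv_eq_one.mp hBSone
  have hconj : τ * σ ^ ((p:ℤ)) * τ⁻¹ = σ ^ ((q:ℤ)) := by
    rw [zpow_natCast, zpow_natCast]; exact hconjN
  -- the map from the abstract (a,b)-free group into F(a,t)
  set eAB : FreeGroup Bool →* FreeGroup Bool := FreeGroup.lift (fun x =>
    if x then FreeGroup.of true
    else (FreeGroup.of false)⁻¹ * (FreeGroup.of true)⁻¹ * FreeGroup.of false) with heABdef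
  have heABa : eAB (FreeGroup.of true) = FreeGroup.of true := by
    rw [heABdef, FreeGroup.lift_apply_of]; simp
  have heABb : eAB (FreeGroup.of false)
      = (FreeGroup.of false)⁻¹ * (FreeGroup.of true)⁻¹ * FreeGroup.of false := by
    rw [heABdef, FreeGroup.lift_apply_of]; simp
  have heW : eAB (Wpq p q) ∈ NG := by
    have : eAB (Wpq p q) = rel := by
      unfold Wpq
      rw [map_christoffel, heABa, heABb]
    rw [this]
    exact Subgroup.subset_normalClosure rfl
  -- transported facts
  have F1 : mkG (FreeGroup.of true) = (mkG (eAB z)) ^ (-(p:ℤ)) := by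
    have := transport eAB heW (x := FreeGroup.of true) (y := z ^ (-(p:ℤ)))
      (by rw [map_zpow]; exact hz1)
    rwa [heABa, map_zpow, map_zpow] at this
  have F2 : mkG ((FreeGroup.of false)⁻¹ * (FreeGroup.of true)⁻¹ * FreeGroup.of false)
      = (mkG (eAB z)) ^ ((q:ℤ)) := by
    have := transport eAB heW (x := FreeGroup.of false) (y := z ^ ((q:ℤ)))
      (by rw [map_zpow]; exact hz2)
    rwa [heABb, map_zpow, map_zpow] at this
  set gz := mkG (eAB z) with hgzdef
  -- the homomorphism φ
  set fphi : FreeGroup Bool →* BS p q := FreeGroup.lift (fun x =>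
    if x then σ ^ (-(p:ℤ)) else τ⁻¹) with hfphidef
  have hfphia : fphi (FreeGroup.of true) = σ ^ (-(p:ℤ)) := by
    rw [hfphidef, FreeGroup.lift_apply_of]; simp
  have hfphit : fphi (FreeGroup.of false) = τ⁻¹ := by
    rw [hfphidef, FreeGroup.lift_apply_of]; simp
  have hfphib : fphi ((FreeGroup.of false)⁻¹ * (FreeGroup.of true)⁻¹ * FreeGroup.of false)
      = σ ^ ((q:ℤ)) := by
    rw [map_mul, map_mul, map_inv, map_inv, hfphia, hfphit, inv_inv, ← hconj]
    group
  have hfphirel : fphi rel = 1 := by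
    rw [hreldef, map_christoffel, hfphia, hfphib, christoffel_zpow]
    have : (-(p:ℤ)) * q + (q:ℤ) * p = 0 := by ring
    rw [this, zpow_zero]
  have hker : NG ≤ fphi.ker := by
    apply Subgroup.normalClosure_le_normal
    intro w hw
    rcases hw with rfl
    exact hfphirel
  set φ : (FreeGroup Bool ⧸ NG) →* BS p q := QuotientGroup.lift NG fphi hker with hφdef
  have hφmk : ∀ x : FreeGroup Bool, φ (mkG x) = fphi x := fun x => rfl
  -- the homomorphism ψ
  have hψrel : ∀ r ∈ ({FreeGroup.of true * (FreeGroup.of false) ^ p * (FreeGroup.of true)⁻¹ *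
      ((FreeGroup.of false) ^ q)⁻¹} : Set (FreeGroup Bool)),
      FreeGroup.lift (fun x => if x then (mkG (FreeGroup.of false))⁻¹ else gz) r = 1 := by
    intro r hr
    rcases hr with rfl
    rw [map_mul, map_mul, map_mul, map_inv, map_inv, map_pow, map_pow,
      FreeGroup.lift_apply_of, FreeGroup.lift_apply_of]
    simp only [if_pos, if_neg, Bool.false_eq_true, ite_true, ite_false]
    have hgp : gz ^ p = (mkG (FreeGroup.of true))⁻¹ := by
      rw [F1, zpow_neg, inv_inv, zpow_natCast]
    have hgq : gz ^ q = mkG ((FreeGroup.of false)⁻¹ * (FreeGroup.of true)⁻¹ *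
        FreeGroup.of false) := by
      rw [F2, zpow_natCast]
    rw [hgp, hgq, inv_inv, map_mul, map_mul, map_inv, map_inv]
    group
  set ψ : BS p q →* (FreeGroup Bool ⧸ NG) := PresentedGroup.toGroup hψrel with hψdef
  have hψτ : ψ τ = (mkG (FreeGroup.of false))⁻¹ := by
    rw [hτdef, hψdef, PresentedGroup.toGroup.of]; simp
  have hψσ : ψ σ = gz := by
    rw [hσdef, hψdef, PresentedGroup.toGroup.of]; simp
  -- ψ ∘ φ = id
  have hψφ : ψ.comp φ = MonoidHom.id _ := by
    apply QuotientGroup.monoidHom_ext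
    apply FreeGroup.ext_hom
    intro x
    cases x
    · show ψ (φ (mkG (FreeGroup.of false))) = mkG (FreeGroup.of false)
      rw [hφmk, hfphit, map_inv, hψτ, inv_inv]
    · show ψ (φ (mkG (FreeGroup.of true))) = mkG (FreeGroup.of true)
      rw [hφmk, hfphia, map_zpow, hψσ, ← F1]
  -- φ ∘ ψ = id
  have hφψ : φ.comp ψ = MonoidHom.id _ := by
    apply PresentedGroup.ext
    intro x
    cases x
    · show φ (ψ σ) = σ
      rw [hψσ, hgzdef]
      have hfac : fphi.comp eAB = (zpowersHom (BS p q) σ).comp (Epq p q) := by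
        apply FreeGroup.ext_hom
        intro y
        cases y
        · rw [MonoidHom.comp_apply, MonoidHom.comp_apply, heABb, hfphib, Epq_false,
            zpowersHom_apply, toAdd_ofAdd]
        · rw [MonoidHom.comp_apply, MonoidHom.comp_apply, heABa, hfphia, Epq_true,
            zpowersHom_apply, toAdd_ofAdd]
      have : φ (mkG (eAB z)) = fphi (eAB z) := rfl
      rw [this]
      have h2 : fphi (eAB z) = (fphi.comp eAB) z := rfl
      rw [h2, hfac, MonoidHom.comp_apply, hz3, zpowersHom_apply, toAdd_ofAdd, zpow_one]
    · show φ (ψ τ) = τ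
      rw [hψτ, map_inv, hφmk, hfphit, inv_inv]
  exact ⟨MonoidHom.toMulEquiv φ ψ hψφ hφψ⟩
end
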